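/- arXiv:2108.04047 — 3 statements merged into one kernel-verified Lean document; each statement's English description precedes it below -/
import Mathlib

section
/- In the multiple-default Cox model: for every n ∈ {0, 1, …, N−1} and every t ≥ 0, P̃-almost surely, E^{P̃}[1_{{τ_{n+1} > t}} | 𝓕_∞ ∨ σ(E_1) ∨ … ∨ σ(E_n)] = exp(−∫_0^{(t−τ_n)⁺} λ̃^{n+1}_s ds), where (t−τ_n)⁺ := max(t−τ_n, 0). Equivalently, P̃(τ_{n+1} > t | 𝒢_∞^{(n)}) = e^{−∫_{t∧τ_n}^{t} λ^{n+1}_s ds} with λ^{n+1}_s := 1_{{s ≥ τ_n}} λ̃^{n+1}_{s−τ_n}. -/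
/-!
Write `X = (ω, E_1, …, E_n)`, so that `𝒢_∞^{(n)} = σ(X)`, and let
`Λ(ω, u) = ∫_0^u λ̃^{n+1}_s(ω) ds`. Almost surely `τ_n` is a measurable function of `X`, and
`τ̃_{n+1}` is the first passage time of `Λ(ω, ·)` above `E_{n+1}`; since `Λ(ω, ·)` is
nondecreasing and right-continuous, `τ_{n+1} > t ⟺ Λ(ω, (t - τ_n)⁺) < E_{n+1}`. The variable
`E_{n+1}` is independent of `X` under `P ⊗ P̂`, so conditioning on `X` freezes
`h(X) := Λ(ω, (t - τ_n)⁺)` and leaves `P̂(E_{n+1} > h) = e^{-h}`.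
-/

open MeasureTheory ProbabilityTheory Set Filter Topology
open scoped ENNReal

lemma MeasureTheory.Measure.map_prod_comp_snd {Ω Ω' β : Type*} {mΩ : MeasurableSpace Ω}
    {mΩ' : MeasurableSpace Ω'} [MeasurableSpace β] (μ : Measure Ω) [IsProbabilityMeasure μ]
    (ν : Measure Ω') [SFinite ν] {V : Ω' → β} (hV : Measurable V) :
    (μ.prod ν).map (fun p => V p.2) = ν.map V := by
  rw [show (fun p : Ω × Ω' => V p.2) = V ∘ Prod.snd from rfl, ← Measure.map_map hV measurable_snd,
    Measure.map_snd_prod, measure_univ, one_smul]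

namespace ProbabilityTheory

section Freezing

variable {α β γ : Type*} {mα : MeasurableSpace α} {mβ : MeasurableSpace β} [MeasurableSpace γ]
  [StandardBorelSpace γ] [Nonempty γ] {μ : Measure α} [IsFiniteMeasure μ] {X : α → β} {Y : α → γ}

theorem condExp_prodMk_ae_eq_integral_of_indepFun (hX : Measurable X) (hY : Measurable Y)
    (hXY : X ⟂ᵢ[μ] Y) {f : β × γ → ℝ} (hf : StronglyMeasurable f)
    (hf_int : Integrable (fun a => f (X a, Y a)) μ) :
    μ[fun a => f (X a, Y a) | mβ.comap X] =ᵐ[μ] fun a => ∫ y, f (X a, y) ∂(μ.map Y) := by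
  have hκ : condDistrib Y X μ =ᵐ[μ.map X] Kernel.const β (μ.map Y) := by
    refine condDistrib_ae_eq_of_measure_eq_compProd X hY.aemeasurable ?_
    rw [Measure.compProd_const]
    exact (indepFun_iff_map_prod_eq_prod_map_map hX.aemeasurable hY.aemeasurable).mp hXY
  filter_upwards [condExp_prod_ae_eq_integral_condDistrib hX hY.aemeasurable hf hf_int,
    ae_of_ae_map hX.aemeasurable hκ] with a hcond hconst
  rw [hcond, hconst, Kernel.const_apply]

theorem condExp_indicator_lt_ae_eq_of_indepFun {Y : α → ℝ} (hX : Measurable X)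
    (hY : Measurable Y) (hXY : X ⟂ᵢ[μ] Y) {h : β → ℝ} (hh : Measurable h) :
    μ[{a | h (X a) < Y a}.indicator 1 | mβ.comap X] =ᵐ[μ]
      fun a => (μ.map Y).real (Ioi (h (X a))) := by
  have hS : MeasurableSet {q : β × ℝ | h q.1 < q.2} :=
    measurableSet_lt (hh.comp measurable_fst) measurable_snd
  have hfreeze := condExp_prodMk_ae_eq_integral_of_indepFun hX hY hXY
    (f := {q : β × ℝ | h q.1 < q.2}.indicator 1)
    (stronglyMeasurable_const.indicator hS)
    ((integrable_const 1).indicator (hS.preimage (hX.prodMk hY)))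
  filter_upwards [hfreeze] with a ha
  exact ha.trans (integral_indicator_one (s := Ioi (h (X a))) measurableSet_Ioi)

end Freezing

theorem indepFun_prodMk_fst_comp_snd {Ω Ω' β γ : Type*} {mΩ : MeasurableSpace Ω}
    {mΩ' : MeasurableSpace Ω'} [MeasurableSpace β] [MeasurableSpace γ]
    {μ : Measure Ω} {ν : Measure Ω'} [IsProbabilityMeasure μ] [IsProbabilityMeasure ν]
    {U : Ω' → β} {V : Ω' → γ} (hU : Measurable U) (hV : Measurable V) (hUV : U ⟂ᵢ[ν] V) :
    (fun p : Ω × Ω' => (p.1, U p.2)) ⟂ᵢ[μ.prod ν] fun p => V p.2 := by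
  rw [indepFun_iff_map_prod_eq_prod_map_map (by fun_prop) (by fun_prop)]
  have hX : (μ.prod ν).map (fun p : Ω × Ω' => (p.1, U p.2)) = μ.prod (ν.map U) := by
    conv_rhs => rw [← Measure.map_id (μ := μ), Measure.map_prod_map _ _ measurable_id hU]
    rfl
  have hXY : (μ.prod ν).map (fun p : Ω × Ω' => ((p.1, U p.2), V p.2))
      = (μ.prod (ν.map (fun ω' => (U ω', V ω')))).map MeasurableEquiv.prodAssoc.symm := by
    conv_rhs => rw [← Measure.map_id (μ := μ), Measure.map_prod_map _ _ measurable_id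
      (hU.prodMk hV), Measure.map_map MeasurableEquiv.prodAssoc.symm.measurable (by fun_prop)]
    rfl
  rw [hX, Measure.map_prod_comp_snd μ ν hV, hXY,
    (indepFun_iff_map_prod_eq_prod_map_map hU.aemeasurable hV.aemeasurable).mp hUV,
    ← Measure.prodAssoc_prod, Measure.map_map MeasurableEquiv.prodAssoc.symm.measurable
      MeasurableEquiv.prodAssoc.measurable, MeasurableEquiv.symm_comp_self, Measure.map_id]

lemma iIndepFun.indepFun_Icc_one_succ {Ω β : Type*} {mΩ : MeasurableSpace Ω}
    [MeasurableSpace β] {μ : Measure Ω} {E : ℕ → Ω → β} (hE : ∀ k, Measurable (E k)) {N n : ℕ}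
    (h : iIndepFun (fun i : Fin N => E (i + 1)) μ) (hn : n < N) :
    (fun ω (k : Finset.Icc 1 n) => E k ω) ⟂ᵢ[μ] E (n + 1) := by
  let S := Finset.univ.filter fun i : Fin N => (i : ℕ) < n
  have hdisj : Disjoint S {⟨n, hn⟩} := by simp [S]
  have hψ : Measurable fun v : S → β => fun k : Finset.Icc 1 n =>
      v ⟨⟨k - 1, by grind⟩, by simp [S]; grind⟩ := by
    fun_prop
  convert (h.indepFun_finset S {⟨n, hn⟩} hdisj fun i => hE _).comp hψ
    (measurable_pi_apply ⟨⟨n, hn⟩, Finset.mem_singleton_self _⟩) using 1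
  · funext ω k
    change E k ω = E (k - 1 + 1) ω
    rw [Nat.sub_add_cancel (Finset.mem_Icc.1 k.2).1]
  · rfl

end ProbabilityTheory

section CumulativeHazard

variable {Ω : Type*} {c : ℝ → Ω → ℝ} {ω : Ω}

noncomputable def cumHazard (c : ℝ → Ω → ℝ) (ω : Ω) (u : ℝ) : ℝ≥0∞ :=
  ∫⁻ s in Ioc 0 u, ENNReal.ofReal (c s ω)

/-- The junk value `0` off the divergence set makes this jointly measurable in `(ω, e)`; on it the
infimum is over a nonempty set. -/
noncomputable def firstPassage (c : ℝ → Ω → ℝ) (ω : Ω) (e : ℝ) : ℝ :=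
  if ∫⁻ s in Ioi 0, ENNReal.ofReal (c s ω) = ∞ then
    sInf {u | 0 < u ∧ ENNReal.ofReal e ≤ cumHazard c ω u}
  else 0

lemma cumHazard_mono : Monotone (cumHazard c ω) :=
  fun _ _ h => lintegral_mono_set (Ioc_subset_Ioc_right h)

lemma cumHazard_of_nonpos {u : ℝ} (hu : u ≤ 0) : cumHazard c ω u = 0 := by
  simp [cumHazard, Ioc_eq_empty (not_lt.2 hu)]

lemma cumHazard_eq_withDensity :
    cumHazard c ω = volume.withDensity (fun s => ENNReal.ofReal (c s ω)) ∘ Ioc 0 :=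
  funext fun _ => (withDensity_apply _ measurableSet_Ioc).symm

lemma exists_le_cumHazard (hdiv : ∫⁻ s in Ioi 0, ENNReal.ofReal (c s ω) = ∞) {e : ℝ≥0∞}
    (he : e < ∞) : ∃ u, 0 < u ∧ e ≤ cumHazard c ω u := by
  have hlim : Tendsto (cumHazard c ω) atTop (𝓝 ∞) := by
    have h := tendsto_measure_iUnion_atTop (ι := ℝ)
      (μ := volume.withDensity fun s => ENNReal.ofReal (c s ω))
      (fun _ _ h => Ioc_subset_Ioc_right h : Monotone fun u : ℝ => Ioc (0 : ℝ) u)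
    rwa [iUnion_Ioc_right, withDensity_apply _ measurableSet_Ioi, hdiv,
      ← cumHazard_eq_withDensity] at h
  obtain ⟨u, hu, hpos⟩ := ((hlim.eventually (lt_mem_nhds he)).and (eventually_gt_atTop 0)).exists
  exact ⟨u, hpos, hu.le⟩

lemma tendsto_cumHazard_nhdsGT {s : ℝ} (hfin : cumHazard c ω (s + 1) ≠ ∞) :
    Tendsto (cumHazard c ω) (𝓝[>] s) (𝓝 (cumHazard c ω s)) := by
  have hinter : ⋂ r > s, Ioc (0 : ℝ) r = Ioc 0 s := by
    ext x
    simp only [mem_iInter, mem_Ioc]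
    refine ⟨fun h => ⟨(h (s + 1) (by linarith)).1, le_of_forall_gt_imp_ge_of_dense
      fun r hr => (h r hr).2⟩, fun h r hr => ⟨h.1, h.2.trans hr.le⟩⟩
  have h := tendsto_measure_biInter_gt (μ := volume.withDensity fun s => ENNReal.ofReal (c s ω))
    (s := fun r : ℝ => Ioc (0 : ℝ) r) (a := s) (fun _ _ => measurableSet_Ioc.nullMeasurableSet)
    (fun _ _ _ h => Ioc_subset_Ioc_right h)
    ⟨s + 1, by linarith, by rwa [cumHazard_eq_withDensity] at hfin⟩
  rwa [hinter, ← Function.comp_apply (f := volume.withDensity _) (g := Ioc 0),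
    ← cumHazard_eq_withDensity] at h

lemma bddBelow_passageSet (e : ℝ≥0∞) :
    BddBelow {u | 0 < u ∧ e ≤ cumHazard c ω u} :=
  ⟨0, fun _ hu => hu.1.le⟩

lemma lt_firstPassage_iff (hfin : ∀ u, cumHazard c ω u ≠ ∞)
    (hdiv : ∫⁻ s in Ioi 0, ENNReal.ofReal (c s ω) = ∞) {e : ℝ} (he : 0 < e) (s : ℝ) :
    s < firstPassage c ω e ↔ (cumHazard c ω s).toReal < e := by
  rw [← ENNReal.lt_ofReal_iff_toReal_lt (hfin s), firstPassage, if_pos hdiv]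
  have hne : {u | 0 < u ∧ ENNReal.ofReal e ≤ cumHazard c ω u}.Nonempty :=
    exists_le_cumHazard hdiv ENNReal.ofReal_lt_top
  constructor
  · intro hs
    rcases le_or_gt s 0 with hs0 | hs0
    · rw [cumHazard_of_nonpos hs0]
      exact ENNReal.ofReal_pos.2 he
    · by_contra! hge
      exact (csInf_le (bddBelow_passageSet _) ⟨hs0, hge⟩).not_gt hs
  · intro hs
    obtain ⟨r, hr, hsr⟩ :=
      (((tendsto_cumHazard_nhdsGT (hfin _)).eventually (gt_mem_nhds hs)).and
        self_mem_nhdsWithin).exists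
    refine hsr.trans_le (le_csInf hne fun u hu => not_lt.1 fun hur => ?_)
    exact (hu.2.trans (cumHazard_mono hur.le)).not_gt hr

lemma firstPassage_lt_iff (hdiv : ∫⁻ s in Ioi 0, ENNReal.ofReal (c s ω) = ∞) {e x : ℝ} :
    firstPassage c ω e < x ↔
      ∃ q : ℚ, 0 < (q : ℝ) ∧ (q : ℝ) < x ∧ ENNReal.ofReal e ≤ cumHazard c ω q := by
  rw [firstPassage, if_pos hdiv]
  constructor
  · intro h
    obtain ⟨u, ⟨hu0, hue⟩, hux⟩ :=
      exists_lt_of_csInf_lt (exists_le_cumHazard hdiv ENNReal.ofReal_lt_top) h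
    obtain ⟨q, huq, hqx⟩ := exists_rat_btwn hux
    exact ⟨q, hu0.trans huq, hqx, hue.trans (cumHazard_mono huq.le)⟩
  · rintro ⟨q, hq0, hqx, hqe⟩
    exact (csInf_le (bddBelow_passageSet _) ⟨hq0, hqe⟩).trans_lt hqx

lemma integral_eq_toReal_cumHazard (hc : Measurable fun s => c s ω) (hnn : ∀ s, 0 ≤ c s ω)
    (u : ℝ) : ∫ s in Ioc 0 u, c s ω = (cumHazard c ω u).toReal :=
  integral_eq_lintegral_of_nonneg_ae (.of_forall hnn) hc.aestronglyMeasurable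

lemma firstPassage_eq_sInf (hc : Measurable fun s => c s ω) (hnn : ∀ s, 0 ≤ c s ω)
    (hfin : ∀ u, cumHazard c ω u ≠ ∞) (hdiv : ∫⁻ s in Ioi 0, ENNReal.ofReal (c s ω) = ∞)
    (e : ℝ) : firstPassage c ω e = sInf {u | 0 < u ∧ e ≤ ∫ s in Ioc 0 u, c s ω} := by
  simp_rw [firstPassage, if_pos hdiv, integral_eq_toReal_cumHazard hc hnn,
    ← ENNReal.ofReal_le_iff_le_toReal (hfin _)]

variable [MeasurableSpace Ω]

lemma measurable_cumHazard (hc : Measurable fun q : ℝ × Ω => c q.1 q.2) :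
    Measurable fun x : Ω × ℝ => cumHazard c x.1 x.2 := by
  have hind : Measurable fun y : (Ω × ℝ) × ℝ =>
      (Ioc 0 y.1.2).indicator (fun s => ENNReal.ofReal (c s y.1.1)) y.2 := by
    simp only [indicator_apply]
    refine Measurable.ite ?_ (by fun_prop) measurable_const
    exact (measurableSet_lt measurable_const measurable_snd).inter
      (measurableSet_le measurable_snd measurable_fst.snd)
  simpa only [cumHazard, ← lintegral_indicator measurableSet_Ioc] using
    hind.lintegral_prod_right' (ν := volume)

lemma measurableSet_cumHazard_divergent (hc : Measurable fun q : ℝ × Ω => c q.1 q.2) :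
    MeasurableSet {ω | ∫⁻ s in Ioi 0, ENNReal.ofReal (c s ω) = ∞} :=
  Measurable.lintegral_prod_right' (f := fun y : Ω × ℝ => ENNReal.ofReal (c y.2 y.1))
    (by fun_prop) (measurableSet_singleton ∞)

lemma measurable_firstPassage (hc : Measurable fun q : ℝ × Ω => c q.1 q.2) :
    Measurable fun x : Ω × ℝ => firstPassage c x.1 x.2 := by
  let D := {ω | ∫⁻ s in Ioi 0, ENNReal.ofReal (c s ω) = ∞}
  refine measurable_of_Iio fun x => ?_
  have hset : (fun y : Ω × ℝ => firstPassage c y.1 y.2) ⁻¹' Iio x =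
      (Prod.fst ⁻¹' D ∩ ⋃ q : ℚ, {y | 0 < (q : ℝ) ∧ (q : ℝ) < x ∧
        ENNReal.ofReal y.2 ≤ cumHazard c y.1 q}) ∪ (Prod.fst ⁻¹' Dᶜ ∩ {_y | 0 < x}) := by
    ext y
    by_cases hy : ∫⁻ s in Ioi 0, ENNReal.ofReal (c s y.1) = ∞
    · simp [D, hy, firstPassage_lt_iff hy]
    · simp [D, hy, firstPassage]
  have hD := measurableSet_cumHazard_divergent hc
  rw [hset]
  refine ((measurable_fst hD).inter (.iUnion fun q => ?_)).union
    ((measurable_fst hD.compl).inter (.const _))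
  exact (MeasurableSet.const _).inter <| (MeasurableSet.const _).inter <|
    measurableSet_le (by fun_prop)
      ((measurable_cumHazard hc).comp (measurable_fst.prodMk measurable_const))

end CumulativeHazard

lemma Set.Ioc_max_self {α : Type*} [LinearOrder α] (a b : α) : Ioc a (max b a) = Ioc a b := by
  rcases le_total b a with h | h <;> simp [h]

lemma MeasurableSpace.comap_fst_sup_iSup_comap_snd {ι Ω Ω' β : Type*} [mΩ : MeasurableSpace Ω]
    [mβ : MeasurableSpace β] (E : ι → Ω' → β) (s : Finset ι) :
    mΩ.comap Prod.fst ⊔ ⨆ i ∈ s, mβ.comap (fun p : Ω × Ω' => E i p.2)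
      = MeasurableSpace.comap (fun p : Ω × Ω' => (p.1, fun i : s => E i p.2)) inferInstance := by
  rw [show (inferInstance : MeasurableSpace (Ω × (s → β))) = mΩ.prod MeasurableSpace.pi from rfl,
    MeasurableSpace.comap_prodMk]
  congr 1
  simp_rw [MeasurableSpace.pi, MeasurableSpace.comap_iSup, MeasurableSpace.comap_comp]
  exact iSup_subtype'

section CoxConstruction

variable {Ω Ω' : Type*} [MeasurableSpace Ω] [MeasurableSpace Ω'] {lam : ℕ → ℝ → Ω → ℝ}

/-- `∫_0^{(t - τ_n)⁺} λ̃^{n+1}` as a function of `(ω, E_1, …, E_n)`. -/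
noncomputable def residualHazard (lam : ℕ → ℝ → Ω → ℝ) (n : ℕ) (t : ℝ)
    (x : Ω × (Finset.Icc 1 n → ℝ)) : ℝ :=
  (cumHazard (lam (n + 1)) x.1
    (t - ∑ k : Finset.Icc 1 n, firstPassage (lam k) x.1 (x.2 k))).toReal

lemma measurable_residualHazard (hlam : ∀ k, Measurable fun q : ℝ × Ω => lam k q.1 q.2)
    (n : ℕ) (t : ℝ) : Measurable (residualHazard lam n t) := by
  refine ((measurable_cumHazard (hlam _)).comp (measurable_fst.prodMk
    (measurable_const.sub (Finset.measurable_sum _ fun k _ => ?_)))).ennreal_toReal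
  exact (measurable_firstPassage (hlam k)).comp
    (measurable_fst.prodMk ((measurable_pi_apply k).comp measurable_snd))

lemma ae_lt_tau_iff_and_integral_eq {P : Measure Ω} {Phat : Measure Ω'} [IsProbabilityMeasure P]
    [IsProbabilityMeasure Phat] {E : ℕ → Ω' → ℝ}
    (hlam_meas : ∀ k, Measurable fun q : ℝ × Ω => lam k q.1 q.2)
    (hlam_nonneg : ∀ k s ω, 0 ≤ lam k s ω) {n : ℕ}
    (hlam_int : ∀ k ∈ Finset.Icc 1 (n + 1), ∀ᵐ ω ∂P, (∀ u, cumHazard (lam k) ω u < ∞) ∧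
      ∫⁻ s in Ioi 0, ENNReal.ofReal (lam k s ω) = ∞)
    (hpos : ∀ᵐ ω' ∂Phat, 0 < E (n + 1) ω') {τ' τ : ℕ → Ω × Ω' → ℝ}
    (hτ' : ∀ k p, τ' k p = sInf {u | 0 < u ∧ E k p.2 ≤ ∫ s in Ioc 0 u, lam k s p.1})
    (hτ : ∀ k p, τ k p = ∑ j ∈ Finset.Icc 1 k, τ' j p) (t : ℝ) :
    ∀ᵐ p ∂P.prod Phat,
      (t < τ (n + 1) p ↔ residualHazard lam n t (p.1, fun k => E k p.2) < E (n + 1) p.2) ∧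
      ∫ s in Ioc 0 (max (t - τ n p) 0), lam (n + 1) s p.1 =
        residualHazard lam n t (p.1, fun k => E k p.2) := by
  have hgood : ∀ᵐ p ∂P.prod Phat, ∀ k ∈ Finset.Icc 1 (n + 1),
      (∀ u, cumHazard (lam k) p.1 u < ∞) ∧ ∫⁻ s in Ioi 0, ENNReal.ofReal (lam k s p.1) = ∞ :=
    (Finset.eventually_all _).2 fun k hk =>
      measurePreserving_fst.quasiMeasurePreserving.ae (hlam_int k hk)
  filter_upwards [hgood, measurePreserving_snd.quasiMeasurePreserving.ae hpos] with p hp hEp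
  have hτ'p : ∀ k ∈ Finset.Icc 1 (n + 1), τ' k p = firstPassage (lam k) p.1 (E k p.2) :=
    fun k hk => by
      rw [hτ', firstPassage_eq_sInf (c := lam k) (ω := p.1) ((hlam_meas k).comp
        measurable_prodMk_right) (hlam_nonneg k · p.1) (fun u => ((hp k hk).1 u).ne) (hp k hk).2]
  have hτn : τ n p = ∑ k : Finset.Icc 1 n, firstPassage (lam k) p.1 (E k p.2) := by
    rw [hτ, Finset.sum_coe_sort (Finset.Icc 1 n) fun k => firstPassage (lam k) p.1 (E k p.2)]
    exact Finset.sum_congr rfl fun k hk => hτ'p k (Finset.Icc_subset_Icc_right n.le_succ hk)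
  have hτn1 : τ (n + 1) p = τ n p + firstPassage (lam (n + 1)) p.1 (E (n + 1) p.2) := by
    rw [hτ, hτ, Finset.sum_Icc_succ_top le_add_self, hτ'p (n + 1) (by simp)]
  obtain ⟨hfin, hdiv⟩ := hp (n + 1) (by simp)
  constructor
  · rw [hτn1, ← sub_lt_iff_lt_add', lt_firstPassage_iff (fun u => (hfin u).ne) hdiv hEp, hτn]
    rfl
  · rw [Ioc_max_self, integral_eq_toReal_cumHazard (c := lam (n + 1)) (ω := p.1)
      ((hlam_meas _).comp measurable_prodMk_right) (hlam_nonneg _ · p.1), hτn]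
    rfl

end CoxConstruction

theorem stmt_5_general
    {Ω Ω' : Type*} [mΩ : MeasurableSpace Ω] [mΩ' : MeasurableSpace Ω']
    (P : Measure Ω) (Phat : Measure Ω')
    [IsProbabilityMeasure P] [IsProbabilityMeasure Phat]
    (N : ℕ)
    (E : ℕ → Ω' → ℝ) (hE_meas : ∀ n, Measurable (E n))
    (hE_indep : iIndepFun
      (fun i : Fin N => E ((i : ℕ) + 1)) Phat)
    (hE_exp : ∀ n : ℕ, 1 ≤ n → n ≤ N → ∀ x : ℝ, 0 ≤ x →
      Phat {ω | x < E n ω} = ENNReal.ofReal (Real.exp (-x)))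
    (lam : ℕ → ℝ → Ω → ℝ)
    (hlam_meas : ∀ n, Measurable fun q : ℝ × Ω => lam n q.1 q.2)
    (hlam_nonneg : ∀ n s ω, 0 ≤ lam n s ω)
    (hlam_int : ∀ n : ℕ, 1 ≤ n → n ≤ N → ∀ᵐ ω ∂P,
      (∀ t : ℝ, ∫⁻ s in Set.Ioc (0:ℝ) t, ENNReal.ofReal (lam n s ω) < ⊤) ∧
      (∫⁻ s in Set.Ioi (0:ℝ), ENNReal.ofReal (lam n s ω) = ⊤))
    (τ' : ℕ → Ω × Ω' → ℝ)
    (hτ' : ∀ n p, τ' n p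
      = sInf {t : ℝ | 0 < t ∧ E n p.2 ≤ ∫ s in Set.Ioc (0:ℝ) t, lam n s p.1})
    (τ : ℕ → Ω × Ω' → ℝ)
    (hτ : ∀ n p, τ n p = ∑ k ∈ Finset.Icc 1 n, τ' k p) :
    ∀ n : ℕ, n < N → ∀ t : ℝ, 0 ≤ t →
      (P.prod Phat)[Set.indicator {p : Ω × Ω' | t < τ (n + 1) p} (fun _ => (1 : ℝ)) |
          MeasurableSpace.comap Prod.fst mΩ ⊔
            ⨆ i ∈ Finset.Icc 1 n,
              MeasurableSpace.comap (fun p : Ω × Ω' => E i p.2) inferInstance]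
        =ᵐ[P.prod Phat]
      fun p => Real.exp (-(∫ s in Set.Ioc (0:ℝ) (max (t - τ n p) 0), lam (n + 1) s p.1)) := by
  intro n hn t _
  let X : Ω × Ω' → Ω × (Finset.Icc 1 n → ℝ) := fun p => (p.1, fun k => E k p.2)
  let Y : Ω × Ω' → ℝ := fun p => E (n + 1) p.2
  have hX : Measurable X := by fun_prop
  have hindep : X ⟂ᵢ[P.prod Phat] Y := indepFun_prodMk_fst_comp_snd (by fun_prop) (hE_meas _)
    (hE_indep.indepFun_Icc_one_succ hE_meas hn)
  have hpos : ∀ᵐ ω' ∂Phat, 0 < E (n + 1) ω' := by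
    rw [ae_iff_measure_eq (measurableSet_lt measurable_const (hE_meas _)).nullMeasurableSet,
      measure_univ, hE_exp (n + 1) le_add_self hn 0 le_rfl, neg_zero, Real.exp_zero,
      ENNReal.ofReal_one]
  have hlaw : ∀ x, 0 ≤ x → ((P.prod Phat).map Y).real (Ioi x) = Real.exp (-x) := fun x hx => by
    rw [measureReal_def, Measure.map_prod_comp_snd P Phat (hE_meas _),
      Measure.map_apply (hE_meas _) measurableSet_Ioi]
    change (Phat {ω | x < E (n + 1) ω}).toReal = _
    rw [hE_exp (n + 1) le_add_self hn x hx, ENNReal.toReal_ofReal (Real.exp_pos _).le]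
  have hrepr := ae_lt_tau_iff_and_integral_eq hlam_meas hlam_nonneg
    (fun k hk => hlam_int k (Finset.mem_Icc.1 hk).1 ((Finset.mem_Icc.1 hk).2.trans hn))
    hpos hτ' hτ t
  rw [MeasurableSpace.comap_fst_sup_iSup_comap_snd]
  calc _ =ᵐ[P.prod Phat]
        (P.prod Phat)[{p | residualHazard lam n t (X p) < Y p}.indicator 1 | _] :=
        condExp_congr_ae <| hrepr.mono fun p hp => by simp [indicator, hp.1, X, Y]
    _ =ᵐ[P.prod Phat] fun p => ((P.prod Phat).map Y).real (Ioi (residualHazard lam n t (X p))) :=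
        condExp_indicator_lt_ae_eq_of_indepFun hX (by fun_prop) hindep
          (measurable_residualHazard hlam_meas n t)
    _ =ᵐ[P.prod Phat] _ := hrepr.mono fun p hp =>
        (hlaw (residualHazard lam n t (X p)) ENNReal.toReal_nonneg).trans (by rw [hp.2])

/-- conditional survival probability of `τ_{n+1}` given
`𝓕_∞ ∨ σ(E_1) ∨ … ∨ σ(E_n)` in the multiple-default Cox model:
`P̃(τ_{n+1} > t | 𝒢_∞^{(n)}) = exp(−∫_0^{(t−τ_n)⁺} λ̃^{n+1}_s ds)`.
`Ω'` plays the role of `Ω̂`, `Phat` of `P̂`, `lam n` of `λ̃ⁿ`, `τ'` of `τ̃`. -/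
theorem stmt_5
    {Ω Ω' : Type*} [mΩ : MeasurableSpace Ω] [mΩ' : MeasurableSpace Ω']
    (P : Measure Ω) (Phat : Measure Ω')
    [IsProbabilityMeasure P] [IsProbabilityMeasure Phat]
    (F : Filtration ℝ mΩ) (hF : (⨆ t : ℝ, (F t : MeasurableSpace Ω)) = mΩ)
    (N : ℕ) (hN : 1 ≤ N)
    (E : ℕ → Ω' → ℝ) (hE_meas : ∀ n, Measurable (E n))
    (hE_indep : iIndepFun
      (fun i : Fin N => E ((i : ℕ) + 1)) Phat)
    (hE_exp : ∀ n : ℕ, 1 ≤ n → n ≤ N → ∀ x : ℝ, 0 ≤ x →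
      Phat {ω | x < E n ω} = ENNReal.ofReal (Real.exp (-x)))
    (lam : ℕ → ℝ → Ω → ℝ)
    (hlam_meas : ∀ n, Measurable fun q : ℝ × Ω => lam n q.1 q.2)
    (hlam_nonneg : ∀ n s ω, 0 ≤ lam n s ω)
    (hlam_adapted : ∀ n t, Measurable[F t] fun ω => lam n t ω)
    (hlam_int : ∀ n : ℕ, 1 ≤ n → n ≤ N → ∀ᵐ ω ∂P,
      (∀ t : ℝ, ∫⁻ s in Set.Ioc (0:ℝ) t, ENNReal.ofReal (lam n s ω) < ⊤) ∧
      (∫⁻ s in Set.Ioi (0:ℝ), ENNReal.ofReal (lam n s ω) = ⊤))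
    (τ' : ℕ → Ω × Ω' → ℝ)
    (hτ' : ∀ n p, τ' n p
      = sInf {t : ℝ | 0 < t ∧ E n p.2 ≤ ∫ s in Set.Ioc (0:ℝ) t, lam n s p.1})
    (τ : ℕ → Ω × Ω' → ℝ)
    (hτ : ∀ n p, τ n p = ∑ k ∈ Finset.Icc 1 n, τ' k p) :
    ∀ n : ℕ, n < N → ∀ t : ℝ, 0 ≤ t →
      (P.prod Phat)[Set.indicator {p : Ω × Ω' | t < τ (n + 1) p} (fun _ => (1 : ℝ)) |
          MeasurableSpace.comap Prod.fst mΩ ⊔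
            ⨆ i ∈ Finset.Icc 1 n,
              MeasurableSpace.comap (fun p : Ω × Ω' => E i p.2) inferInstance]
        =ᵐ[P.prod Phat]
      fun p => Real.exp (-(∫ s in Set.Ioc (0:ℝ) (max (t - τ n p) 0), lam (n + 1) s p.1)) :=
  stmt_5_general (mΩ := mΩ) (mΩ' := mΩ') P Phat N E hE_meas hE_indep hE_exp lam hlam_meas
    hlam_nonneg hlam_int τ' hτ' τ hτ
end

section
/- In the multiple-default Cox model: for every P̃-integrable 𝒢-measurable Y : Ω̃ → ℝ, every k ∈ {0, 1, …, N} and every t ≥ 0, the conditional probability E^{P̃}[1_{{τ_{k+1} > t}} | 𝒢_t^{(k)}] is P̃-a.s. strictly positive on {τ_k ≤ t < τ_{k+1}}, and P̃-almost surely E^{P̃}[1_{{τ_k ≤ t < τ_{k+1}}} Y | 𝒢_t^{(N)}] = 1_{{τ_k ≤ t < τ_{k+1}}} · E^{P̃}[1_{{τ̃_{k+1} > t − τ_k}} Y | 𝒢_t^{(k)}] / E^{P̃}[1_{{τ_{k+1} > t}} | 𝒢_t^{(k)}], where for k = N the conventions τ_{N+1} = +∞ and τ̃_{N+1} = +∞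 make the indicator 1_{{τ̃_{N+1} > t − τ_N}} and the denominator identically 1. -/
open MeasureTheory ProbabilityTheory Set

open scoped ENNReal

/-!
On `A = {τ_k ≤ t < τ_{k+1}}` the σ-algebras `𝒢_t^{(N)}` and `𝒢_t^{(k)}` have the same trace: every
generator `{τ_i ≤ s}`, `s ≤ t`, of a later default time `i > k` misses `A`. By the Doob–Dynkin
lemma, `Z = E[1_A Y | 𝒢_t^{(N)}]` therefore agrees on `A` with a `𝒢_t^{(k)}`-measurable `W`, and the
tower and pull-out properties give `E[1_A Y | 𝒢_t^{(k)}] = W · E[1_A | 𝒢_t^{(k)}]`. The second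
factor is positive a.e. on `A`, so `Z = 1_A E[1_A Y | 𝒢_t^{(k)}] / E[1_A | 𝒢_t^{(k)}]`. Finally
`{τ_k ≤ t} ∈ 𝒢_t^{(k)}` can be pulled out of both conditional expectations, and on it
`{τ̃_{k+1} > t - τ_k} = {τ_{k+1} > t}`.

The only property of the default times needed besides this is that they are measurable. For the
first-passage times `τ̃_n` this takes some care, because the Bochner integral `∫ λ̃ⁿ` drops to `0`
once the integrated intensity becomes infinite.
-/

namespace Real

theorem sInf_eq_of_subset_of_forall_le_mem {S S' : Set ℝ} (hSS' : S ⊆ S')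
    (hdown : ∀ x ∈ S', ∀ y ∈ S, x ≤ y → x ∈ S) (hS : S.Nonempty) (hbdd : BddBelow S') :
    sInf S = sInf S' := by
  obtain ⟨y, hy⟩ := hS
  refine le_antisymm (le_csInf ⟨y, hSS' hy⟩ fun x hx => ?_) (csInf_le_csInf hbdd ⟨y, hy⟩ hSS')
  rcases le_total x y with hxy | hyx
  · exact csInf_le (hbdd.mono hSS') (hdown x hx y hy hxy)
  · exact (csInf_le (hbdd.mono hSS') hy).trans hyx

theorem nonempty_iff_sInf_mem_or_exists_rat_mem {S S' : Set ℝ} (hSS' : S ⊆ S')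
    (hup : IsUpperSet S') (hdown : ∀ x ∈ S', ∀ y ∈ S, x ≤ y → x ∈ S) (hbdd : BddBelow S') :
    S.Nonempty ↔ sInf S' ∈ S ∨ ∃ q : ℚ, (q : ℝ) ∈ S := by
  refine ⟨fun hS => ?_, fun h => h.elim (fun h => ⟨_, h⟩) fun ⟨q, hq⟩ => ⟨q, hq⟩⟩
  rw [← sInf_eq_of_subset_of_forall_le_mem hSS' hdown hS hbdd]
  by_contra! h
  obtain ⟨y, hy⟩ := hS
  have hlt : sInf S < y := (csInf_le (hbdd.mono hSS') hy).lt_of_ne fun h' => h.1 (h' ▸ hy)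
  obtain ⟨q, hSq, hqy⟩ := exists_rat_btwn hlt
  obtain ⟨x, hx, hxq⟩ := exists_lt_of_csInf_lt ⟨y, hy⟩ hSq
  exact h.2 q (hdown q (hup hxq.le (hSS' hx)) y hy hqy.le)

/-- The second alternative accounts for the junk value `sInf ∅ = 0`. -/
theorem sInf_lt_iff_of_isUpperSet {S : Set ℝ} (hup : IsUpperSet S) (hbdd : BddBelow S) (x : ℝ) :
    sInf S < x ↔ (∃ q : ℚ, (q : ℝ) ∈ S ∧ (q : ℝ) < x) ∨ ((∀ q : ℚ, (q : ℝ) ∉ S) ∧ 0 < x) := by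
  rcases S.eq_empty_or_nonempty with rfl | ⟨y, hy⟩
  · simp
  obtain ⟨q, hyq⟩ := exists_rat_gt y
  simp only [csInf_lt_iff hbdd ⟨y, hy⟩, show ¬∀ q : ℚ, (q : ℝ) ∉ S from
    fun h => h q (hup hyq.le hy), false_and, or_false]
  refine ⟨fun ⟨z, hz, hzx⟩ => ?_, fun ⟨q, hq, hqx⟩ => ⟨q, hq, hqx⟩⟩
  obtain ⟨r, hzr, hrx⟩ := exists_rat_btwn hzx
  exact ⟨r, hup hzr.le hz, hrx⟩

end Real

section HittingTime

variable {β : Type*} [MeasurableSpace β]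

theorem measurable_sInf_of_isUpperSet {S : β → Set ℝ} (hup : ∀ p, IsUpperSet (S p))
    (hbdd : ∀ p, BddBelow (S p)) (hmeas : ∀ x, MeasurableSet {p | x ∈ S p}) :
    Measurable fun p => sInf (S p) := by
  refine measurable_of_Iio fun x => ?_
  have : (fun p => sInf (S p)) ⁻¹' Iio x =
      (⋃ q : ℚ, {p | (q : ℝ) ∈ S p} ∩ {_p | (q : ℝ) < x}) ∪
        ((⋂ q : ℚ, {p | (q : ℝ) ∈ S p}ᶜ) ∩ {_p | 0 < x}) := by
    ext p
    simp [Real.sInf_lt_iff_of_isUpperSet (hup p) (hbdd p)]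
  rw [this]
  exact .union (.iUnion fun q : ℚ => (hmeas q).inter (.const _))
    ((MeasurableSet.iInter fun q : ℚ => (hmeas q).compl).inter (.const _))

theorem measurable_setLIntegral_Ioc {f : ℝ → β → ℝ≥0∞} (hf : Measurable (Function.uncurry f)) :
    Measurable fun q : ℝ × β => ∫⁻ s in Ioc 0 q.1, f s q.2 := by
  simp_rw [← lintegral_indicator measurableSet_Ioc, indicator_apply]
  refine Measurable.lintegral_prod_right' (ν := volume)
    (f := fun z : (ℝ × β) × ℝ => if z.2 ∈ Ioc 0 z.1.1 then f z.2 z.1.2 else 0)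
    (Measurable.ite ?_ ?_ measurable_const)
  · exact (measurableSet_lt measurable_const measurable_snd).inter
      (measurableSet_le measurable_snd (measurable_fst.comp measurable_fst))
  · exact hf.comp (measurable_snd.prodMk (measurable_snd.comp measurable_fst))

theorem measurable_sInf_setOf_le_toReal {L : ℝ → β → ℝ≥0∞}
    (hL : Measurable (Function.uncurry L)) (hmono : ∀ p, Monotone (L · p)) {x : β → ℝ}
    (hx : Measurable x) :
    Measurable fun p => sInf {t | 0 < t ∧ x p ≤ (L t p).toReal} := by
  classical
  set S : β → Set ℝ := fun p => {t | 0 < t ∧ x p ≤ (L t p).toReal}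
  -- `S' p` is an upper set; `S p` is the part of it before `L` becomes infinite, where `toReal`
  -- drops to `0`
  set S' : β → Set ℝ := fun p => {t | 0 < t ∧ ENNReal.ofReal (x p) ≤ L t p}
  have hSS' (p) : S p ⊆ S' p := fun t ht =>
    ⟨ht.1, (ENNReal.ofReal_le_ofReal ht.2).trans ENNReal.ofReal_toReal_le⟩
  have hup (p) : IsUpperSet (S' p) := fun t r htr ht =>
    ⟨ht.1.trans_le htr, ht.2.trans (hmono p htr)⟩
  have hdown (p) : ∀ r ∈ S' p, ∀ t ∈ S p, r ≤ t → r ∈ S p := by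
    intro r hr t ht hrt
    refine ⟨hr.1, ?_⟩
    by_cases hLr : L r p = ⊤
    · have : L t p = ⊤ := top_le_iff.1 (hLr ▸ hmono p hrt)
      simpa [hLr, this] using ht.2
    · exact (ENNReal.ofReal_le_iff_le_toReal hLr).1 hr.2
  have hbdd (p) : BddBelow (S' p) := ⟨0, fun t ht => ht.1.le⟩
  have hmem {f : β → ℝ} (hf : Measurable f) : MeasurableSet {p | f p ∈ S p} :=
    (measurableSet_lt measurable_const hf).inter
      (measurableSet_le hx (hL.comp (hf.prodMk measurable_id)).ennreal_toReal)
  have hS'meas : Measurable fun p => sInf (S' p) :=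
    measurable_sInf_of_isUpperSet hup hbdd fun t =>
      (MeasurableSet.const (0 < t)).inter
        (measurableSet_le (ENNReal.measurable_ofReal.comp hx)
          (hL.comp (measurable_const.prodMk measurable_id)))
  have hne : MeasurableSet {p | (S p).Nonempty} := by
    simp_rw [Real.nonempty_iff_sInf_mem_or_exists_rat_mem (hSS' _) (hup _) (hdown _) (hbdd _),
      ofPred_or, ofPred_exists]
    exact (hmem hS'meas).union (.iUnion fun q => hmem measurable_const)
  have heq : (fun p => sInf (S p)) = fun p => if (S p).Nonempty then sInf (S' p) else 0 := by
    ext p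
    split_ifs with h
    · exact Real.sInf_eq_of_subset_of_forall_le_mem (hSS' p) (hdown p) h (hbdd p)
    · rw [not_nonempty_iff_eq_empty.1 h, Real.sInf_empty]
  rw [heq]
  exact Measurable.ite hne hS'meas measurable_const

theorem measurable_sInf_setOf_le_integral {lam : ℝ → β → ℝ}
    (hlam : Measurable (Function.uncurry lam)) (hnn : ∀ s p, 0 ≤ lam s p) {x : β → ℝ}
    (hx : Measurable x) :
    Measurable fun p => sInf {t | 0 < t ∧ x p ≤ ∫ s in Ioc 0 t, lam s p} := by
  have h (t : ℝ) (p : β) :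
      ∫ s in Ioc 0 t, lam s p = (∫⁻ s in Ioc 0 t, ENNReal.ofReal (lam s p)).toReal :=
    integral_eq_lintegral_of_nonneg_ae (.of_forall fun s => hnn s p)
      (hlam.comp (measurable_id.prodMk measurable_const)).aestronglyMeasurable
  simp_rw [h]
  exact measurable_sInf_setOf_le_toReal
    (measurable_setLIntegral_Ioc (f := fun s p => ENNReal.ofReal (lam s p))
      (ENNReal.measurable_ofReal.comp hlam))
    (fun p t r htr => lintegral_mono_set (Ioc_subset_Ioc_right htr)) hx

end HittingTime

section CondExp

variable {α : Type*} {m m₂ m0 : MeasurableSpace α} {μ : Measure α} [IsFiniteMeasure μ]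

theorem ae_pos_condExp_indicator_one (hm : m ≤ m0) {C : Set α} (hC : MeasurableSet C) :
    ∀ᵐ x ∂μ, x ∈ C → 0 < μ[C.indicator (fun _ => (1 : ℝ)) | m] x := by
  set g := μ[C.indicator (fun _ => (1 : ℝ)) | m]
  set Z := {x | g x ≤ 0}
  have hZ : MeasurableSet[m] Z :=
    (stronglyMeasurable_condExp (m := m) (μ := μ)).measurable (measurableSet_Iic (a := (0 : ℝ)))
  have hZC : μ.real (Z ∩ C) ≤ 0 := by
    calc μ.real (Z ∩ C) = ∫ x in Z, C.indicator (fun _ => (1 : ℝ)) x ∂μ := by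
          rw [setIntegral_indicator hC, setIntegral_const, smul_eq_mul, mul_one]
      _ = ∫ x in Z, g x ∂μ :=
          (setIntegral_condExp hm ((integrable_const 1).indicator hC) hZ).symm
      _ ≤ 0 := setIntegral_nonpos (hm _ hZ) fun _ hx => hx
  have hnull : μ (Z ∩ C) = 0 :=
    (measureReal_eq_zero_iff).1 (le_antisymm hZC measureReal_nonneg)
  refine measure_mono_null (fun x hx => ?_) hnull
  simp only [mem_compl_iff, mem_ofPred_eq, Classical.not_imp, not_lt] at hx
  exact ⟨hx.2, hx.1⟩

theorem condExp_indicator_ae_eq_indicator_div (hm : m ≤ m₂) (hm₂ : m₂ ≤ m0) {A : Set α}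
    (hA : MeasurableSet[m₂] A) (htrace : m₂.comap ((↑) : A → α) ≤ m.comap (↑))
    {Y : α → ℝ} (hY : Integrable Y μ) :
    μ[A.indicator Y | m₂] =ᵐ[μ] A.indicator fun x =>
      μ[A.indicator Y | m] x / μ[A.indicator (fun _ => (1 : ℝ)) | m] x := by
  set Z := μ[A.indicator Y | m₂]
  have hZA : Z =ᵐ[μ] A.indicator Z := by
    have := condExp_indicator (m := m₂) (hY.indicator (hm₂ _ hA)) hA
    rwa [indicator_indicator, inter_self] at this
  -- Doob–Dynkin: since `m₂` and `m` have the same trace on `A`, there `Z` is `m`-measurable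
  obtain ⟨W, hW, hZW⟩ : ∃ W : α → ℝ, StronglyMeasurable[m] W ∧ Z ∘ (↑) = W ∘ ((↑) : A → α) :=
    StronglyMeasurable.exists_eq_measurable_comp (mY := m)
      ((stronglyMeasurable_condExp.comp_measurable (comap_measurable _)).mono htrace)
  have hAZW : A.indicator Z = A.indicator W :=
    indicator_congr fun x hx => congrFun hZW ⟨x, hx⟩
  have hWA : A.indicator W = W * A.indicator (fun _ => (1 : ℝ)) := by
    ext x
    by_cases hx : x ∈ A <;> simp [hx]
  have hnum : μ[A.indicator Y | m] =ᵐ[μ] W * μ[A.indicator (fun _ => (1 : ℝ)) | m] :=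
    calc μ[A.indicator Y | m] =ᵐ[μ] μ[Z | m] := (condExp_condExp_of_le hm hm₂).symm
      _ =ᵐ[μ] μ[W * A.indicator (fun _ => (1 : ℝ)) | m] :=
          condExp_congr_ae (hZA.trans (by rw [hAZW, hWA]))
      _ =ᵐ[μ] W * μ[A.indicator (fun _ => (1 : ℝ)) | m] :=
          condExp_mul_of_stronglyMeasurable_left hW
            (by rw [← hWA, ← hAZW]; exact integrable_condExp.indicator (hm₂ _ hA))
            ((integrable_const 1).indicator (hm₂ _ hA))
  filter_upwards [hZA, hnum, ae_pos_condExp_indicator_one (μ := μ) (hm.trans hm₂) (hm₂ _ hA)]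
    with x hZx hnumx hpos
  by_cases hx : x ∈ A
  · rw [hZx, hAZW, indicator_of_mem hx, indicator_of_mem hx, hnumx, Pi.mul_apply,
      mul_div_cancel_right₀ _ (hpos hx).ne']
  · rw [hZx, indicator_of_notMem hx, indicator_of_notMem hx]

end CondExp

section CoxSigma

variable {α : Type*} {G : MeasurableSpace α} {τ : ℕ → α → ℝ} {t : ℝ} {k n : ℕ}

/-- `𝓗_t` of the paper, for a single default time `τ`. -/
abbrev hitSigma (τ : α → ℝ) (t : ℝ) : MeasurableSpace α :=
  MeasurableSpace.generateFrom {A | ∃ s : ℝ, 0 ≤ s ∧ s ≤ t ∧ A = {q | τ q ≤ s}}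

/-- `𝒢_t^{(n)}` of the paper, with `G` in the role of `𝓕_t`. -/
abbrev coxSigma (G : MeasurableSpace α) (τ : ℕ → α → ℝ) (t : ℝ) (n : ℕ) : MeasurableSpace α :=
  G ⊔ ⨆ i ∈ Finset.Icc 1 n, hitSigma (τ i) t

theorem hitSigma_le [m0 : MeasurableSpace α] {τ : α → ℝ} (hτ : Measurable τ) :
    hitSigma τ t ≤ m0 :=
  MeasurableSpace.generateFrom_le fun _ ⟨_, _, _, hA⟩ => hA ▸ measurableSet_le hτ measurable_const

theorem hitSigma_le_coxSigma {i : ℕ} (hi : 1 ≤ i) (hin : i ≤ n) :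
    hitSigma (τ i) t ≤ coxSigma G τ t n :=
  le_sup_of_le_right (le_iSup₂_of_le i (Finset.mem_Icc.2 ⟨hi, hin⟩) le_rfl)

theorem coxSigma_mono (hkn : k ≤ n) : coxSigma G τ t k ≤ coxSigma G τ t n :=
  sup_le le_sup_left (iSup₂_le fun _ hi =>
    hitSigma_le_coxSigma (Finset.mem_Icc.1 hi).1 ((Finset.mem_Icc.1 hi).2.trans hkn))

theorem coxSigma_le [m0 : MeasurableSpace α] (hG : G ≤ m0) (hτ : ∀ i, Measurable (τ i)) :
    coxSigma G τ t n ≤ m0 :=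
  sup_le hG (iSup₂_le fun i _ => hitSigma_le (hτ i))

theorem measurableSet_coxSigma_le (hτ0 : ∀ q, τ 0 q = 0) (ht : 0 ≤ t) :
    MeasurableSet[coxSigma G τ t n] {q | τ n q ≤ t} := by
  rcases n.eq_zero_or_pos with rfl | hn
  · simp [hτ0, ht]
  · exact hitSigma_le_coxSigma hn le_rfl _
      (MeasurableSpace.measurableSet_generateFrom ⟨t, ht, le_rfl, rfl⟩)

theorem measurableSet_coxSigma_imp_lt (hτ0 : ∀ q, τ 0 q = 0) (ht : 0 ≤ t) :
    MeasurableSet[coxSigma G τ t n] {q | k < n → t < τ (k + 1) q} := by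
  by_cases hkn : k < n
  · simp_rw [hkn, true_imp_iff, ← not_le]
    exact (coxSigma_mono hkn _ (measurableSet_coxSigma_le hτ0 ht)).compl
  · simp [hkn]

theorem comap_coxSigma_le (D : Set α) (hD : ∀ i, k < i → i ≤ n → ∀ q ∈ D, t < τ i q) :
    (coxSigma G τ t n).comap ((↑) : D → α) ≤ (coxSigma G τ t k).comap (↑) := by
  simp only [coxSigma, MeasurableSpace.comap_sup, MeasurableSpace.comap_iSup]
  refine sup_le le_sup_left (iSup₂_le fun i hi => ?_)
  obtain ⟨hi1, hin⟩ := Finset.mem_Icc.1 hi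
  by_cases hik : i ≤ k
  · exact le_sup_of_le_right (le_iSup₂_of_le i (Finset.mem_Icc.2 ⟨hi1, hik⟩) le_rfl)
  -- each generator `{τ i ≤ s}`, `s ≤ t`, of a later default time misses `D`
  rw [hitSigma, MeasurableSpace.comap_generateFrom]
  refine MeasurableSpace.generateFrom_le ?_
  rintro _ ⟨_, ⟨s, -, hst, rfl⟩, rfl⟩
  convert MeasurableSet.empty
  ext ⟨q, hq⟩
  simpa using hst.trans_lt (hD i (not_le.1 hik) hin q hq)

theorem condExp_indicator_coxSigma_ae_eq [m0 : MeasurableSpace α] {μ : Measure α}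
    [IsFiniteMeasure μ] (hG : G ≤ m0) (hτ : ∀ i, Measurable (τ i)) (hτ0 : ∀ q, τ 0 q = 0)
    (hmono : ∀ q, Monotone (τ · q)) (hkn : k ≤ n) (ht : 0 ≤ t) {B : Set α}
    (hB : MeasurableSet B) (hBC : ∀ q, τ k q ≤ t → (q ∈ B ↔ (k < n → t < τ (k + 1) q)))
    {Y : α → ℝ} (hY : Integrable Y μ) :
    μ[{q | τ k q ≤ t ∧ (k < n → t < τ (k + 1) q)}.indicator Y | coxSigma G τ t n] =ᵐ[μ]
      {q | τ k q ≤ t ∧ (k < n → t < τ (k + 1) q)}.indicator fun q =>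
        μ[B.indicator Y | coxSigma G τ t k] q /
          μ[{q | k < n → t < τ (k + 1) q}.indicator (fun _ => (1 : ℝ)) | coxSigma G τ t k] q := by
  set A := {q | τ k q ≤ t}
  set C := {q | k < n → t < τ (k + 1) q}
  have hA : MeasurableSet[coxSigma G τ t k] A := measurableSet_coxSigma_le hτ0 ht
  have hC : MeasurableSet[coxSigma G τ t n] C := measurableSet_coxSigma_imp_lt hτ0 ht
  have hAB : A ∩ B = A ∩ C := ext fun q => and_congr_right (hBC q)
  change μ[(A ∩ C).indicator Y | _] =ᵐ[μ] (A ∩ C).indicator _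
  refine (condExp_indicator_ae_eq_indicator_div (coxSigma_mono hkn) (coxSigma_le hG hτ)
    ((coxSigma_mono hkn _ hA).inter hC) (comap_coxSigma_le _ fun i hki hin q hq =>
      (hq.2 (hki.trans_le hin)).trans_le (hmono q hki)) hY).trans ?_
  have hnum : μ[(A ∩ C).indicator Y | coxSigma G τ t k] =ᵐ[μ]
      A.indicator (μ[B.indicator Y | coxSigma G τ t k]) := by
    rw [← hAB, ← indicator_indicator]
    exact condExp_indicator (hY.indicator hB) hA
  have hden : μ[(A ∩ C).indicator (fun _ => (1 : ℝ)) | coxSigma G τ t k] =ᵐ[μ]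
      A.indicator (μ[C.indicator (fun _ => (1 : ℝ)) | coxSigma G τ t k]) := by
    rw [← indicator_indicator]
    exact condExp_indicator ((integrable_const 1).indicator (coxSigma_le hG hτ _ hC)) hA
  filter_upwards [hnum, hden] with q hnum hden
  by_cases hq : q ∈ A ∩ C
  · simp only [indicator_of_mem hq, hnum, hden, indicator_of_mem hq.1]
  · simp only [indicator_of_notMem hq]

end CoxSigma

section ExtendedTime

variable {α : Type*} {σ : ℕ → α → ℝ} {σe : ℕ → α → ℝ≥0∞} {N k : ℕ}

theorem ofReal_lt_apply_succ_iff (hσe : ∀ n ≤ N, ∀ p, σe n p = ENNReal.ofReal (σ n p))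
    (hσe_top : ∀ p, σe (N + 1) p = ⊤) (hk : k ≤ N) {x : ℝ} (hx : 0 ≤ x) (p : α) :
    ENNReal.ofReal x < σe (k + 1) p ↔ (k < N → x < σ (k + 1) p) := by
  rcases hk.lt_or_eq with hkN | rfl
  · simp [hσe _ hkN, ENNReal.ofReal_lt_ofReal_iff_of_nonneg hx, hkN]
  · simp [hσe_top]

theorem measurable_apply_succ [MeasurableSpace α]
    (hσe : ∀ n ≤ N, ∀ p, σe n p = ENNReal.ofReal (σ n p)) (hσe_top : ∀ p, σe (N + 1) p = ⊤)
    (hk : k ≤ N) (hσ : Measurable (σ (k + 1))) : Measurable (σe (k + 1)) := by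
  rcases hk.lt_or_eq with hkN | rfl
  · rw [funext (hσe _ hkN)]
    exact ENNReal.measurable_ofReal.comp hσ
  · rw [funext hσe_top]
    exact measurable_const

end ExtendedTime

theorem stmt_10_general
    {Ω Ω' : Type*} [mΩ : MeasurableSpace Ω] [mΩ' : MeasurableSpace Ω']
    (P : Measure Ω) (Phat : Measure Ω')
    [IsProbabilityMeasure P] [IsProbabilityMeasure Phat]
    (F : Filtration ℝ mΩ)
    (N : ℕ)
    (E : ℕ → Ω' → ℝ) (hE_meas : ∀ n, Measurable (E n))
    (lam : ℕ → ℝ → Ω → ℝ)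
    (hlam_meas : ∀ n, Measurable fun q : ℝ × Ω => lam n q.1 q.2)
    (hlam_nonneg : ∀ n s ω, 0 ≤ lam n s ω)
    (τ' : ℕ → Ω × Ω' → ℝ)
    (hτ' : ∀ n p, τ' n p
      = sInf {t : ℝ | 0 < t ∧ E n p.2 ≤ ∫ s in Set.Ioc (0:ℝ) t, lam n s p.1})
    (τ : ℕ → Ω × Ω' → ℝ)
    (hτ : ∀ n p, τ n p = ∑ k ∈ Finset.Icc 1 n, τ' k p)
    -- `[0,∞]`-valued extensions implementing the conventions `τ_{N+1} = τ̃_{N+1} = +∞`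
    (τe : ℕ → Ω × Ω' → ENNReal)
    (hτe : ∀ n : ℕ, n ≤ N → ∀ p, τe n p = ENNReal.ofReal (τ n p))
    (hτe_top : ∀ p, τe (N + 1) p = ⊤)
    (τ'e : ℕ → Ω × Ω' → ENNReal)
    (hτ'e : ∀ n : ℕ, n ≤ N → ∀ p, τ'e n p = ENNReal.ofReal (τ' n p))
    (hτ'e_top : ∀ p, τ'e (N + 1) p = ⊤) :
    ∀ Y : Ω × Ω' → ℝ, Integrable Y (P.prod Phat) →
      ∀ k : ℕ, k ≤ N → ∀ t : ℝ, 0 ≤ t →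
        (∀ᵐ p ∂(P.prod Phat),
          (τe k p ≤ ENNReal.ofReal t ∧ ENNReal.ofReal t < τe (k + 1) p) →
            0 < ((P.prod Phat)[Set.indicator
                  {q : Ω × Ω' | ENNReal.ofReal t < τe (k + 1) q} (fun _ => (1 : ℝ)) |
                MeasurableSpace.comap Prod.fst (F t) ⊔
                  ⨆ i ∈ Finset.Icc 1 k,
                    MeasurableSpace.generateFrom
                      {A : Set (Ω × Ω') | ∃ s : ℝ, 0 ≤ s ∧ s ≤ t ∧ A = {q | τ i q ≤ s}}]) p) ∧
        ((P.prod Phat)[Set.indicator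
              {q : Ω × Ω' | τe k q ≤ ENNReal.ofReal t ∧ ENNReal.ofReal t < τe (k + 1) q} Y |
            MeasurableSpace.comap Prod.fst (F t) ⊔
              ⨆ i ∈ Finset.Icc 1 N,
                MeasurableSpace.generateFrom
                  {A : Set (Ω × Ω') | ∃ s : ℝ, 0 ≤ s ∧ s ≤ t ∧ A = {q | τ i q ≤ s}}]
          =ᵐ[P.prod Phat]
        Set.indicator
            {q : Ω × Ω' | τe k q ≤ ENNReal.ofReal t ∧ ENNReal.ofReal t < τe (k + 1) q}
            (fun p =>
              ((P.prod Phat)[Set.indicator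
                    {q : Ω × Ω' | ENNReal.ofReal (t - τ k q) < τ'e (k + 1) q} Y |
                  MeasurableSpace.comap Prod.fst (F t) ⊔
                    ⨆ i ∈ Finset.Icc 1 k,
                      MeasurableSpace.generateFrom
                        {A : Set (Ω × Ω') | ∃ s : ℝ, 0 ≤ s ∧ s ≤ t ∧ A = {q | τ i q ≤ s}}]) p
              / ((P.prod Phat)[Set.indicator
                    {q : Ω × Ω' | ENNReal.ofReal t < τe (k + 1) q} (fun _ => (1 : ℝ)) |
                  MeasurableSpace.comap Prod.fst (F t) ⊔
                    ⨆ i ∈ Finset.Icc 1 k,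
                      MeasurableSpace.generateFrom
                        {A : Set (Ω × Ω') | ∃ s : ℝ, 0 ≤ s ∧ s ≤ t ∧ A = {q | τ i q ≤ s}}]) p)) := by
  intro Y hY k hk t ht
  have hτ'_nonneg (n p) : 0 ≤ τ' n p := by
    rw [hτ']
    exact Real.sInf_nonneg fun _ hx => hx.1.le
  have hτ'_meas (n) : Measurable (τ' n) := by
    rw [funext (hτ' n)]
    exact measurable_sInf_setOf_le_integral (lam := fun s (p : Ω × Ω') => lam n s p.1)
      ((hlam_meas n).comp (measurable_fst.prodMk (measurable_fst.comp measurable_snd)))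
      (fun s p => hlam_nonneg n s p.1) ((hE_meas n).comp measurable_snd)
  have hτ_meas (n) : Measurable (τ n) := by
    rw [funext (hτ n)]
    exact Finset.measurable_sum _ fun j _ => hτ'_meas j
  have hτ_succ (n p) : τ (n + 1) p = τ n p + τ' (n + 1) p := by
    rw [hτ, hτ, Finset.sum_Icc_succ_top (by omega)]
  have hτ_mono (p) : Monotone (τ · p) := monotone_nat_of_le_succ fun n => by
    linarith [hτ_succ n p, hτ'_nonneg (n + 1) p]
  have hτ0 (p) : τ 0 p = 0 := by simp [hτ]
  have hG : MeasurableSpace.comap Prod.fst (F t) ≤ mΩ.prod mΩ' :=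
    (MeasurableSpace.comap_mono (F.le t)).trans measurable_fst.comap_le
  have hA (q) : τe k q ≤ ENNReal.ofReal t ↔ τ k q ≤ t := by
    rw [hτe k hk, ENNReal.ofReal_le_ofReal_iff ht]
  have hBC (q) (hq : τ k q ≤ t) :
      ENNReal.ofReal (t - τ k q) < τ'e (k + 1) q ↔ (k < N → t < τ (k + 1) q) := by
    rw [ofReal_lt_apply_succ_iff hτ'e hτ'e_top hk (sub_nonneg.2 hq), hτ_succ, sub_lt_iff_lt_add']
  have hB : MeasurableSet {q | ENNReal.ofReal (t - τ k q) < τ'e (k + 1) q} :=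
    measurableSet_lt (ENNReal.measurable_ofReal.comp (measurable_const.sub (hτ_meas k)))
      (measurable_apply_succ hτ'e hτ'e_top hk (hτ'_meas _))
  simp_rw [hA, ofReal_lt_apply_succ_iff hτe hτe_top hk ht]
  exact ⟨(ae_pos_condExp_indicator_one (coxSigma_le hG hτ_meas)
      (coxSigma_le hG hτ_meas _ (measurableSet_coxSigma_imp_lt hτ0 ht))).mono fun _ h hq => h hq.2,
    condExp_indicator_coxSigma_ae_eq hG hτ_meas hτ0 hτ_mono hk ht hB hBC hY⟩

/-- Lemma 3.4 of the paper, filtration-reduction formula: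
`E[1_{τ_k ≤ t < τ_{k+1}} Y | 𝒢_t^{(N)}]
  = 1_{τ_k ≤ t < τ_{k+1}} · E[1_{τ̃_{k+1} > t−τ_k} Y | 𝒢_t^{(k)}] / P̃(τ_{k+1} > t | 𝒢_t^{(k)})`,
with the denominator a.s. strictly positive on the event.  Here the conventions
`τ_{N+1} = τ̃_{N+1} = +∞` are encoded through `[0,∞]`-valued extensions `τe`, `τ'e` of
`τ`, `τ'`.  `Ω'` plays the role of `Ω̂`, `Phat` of `P̂`, `lam n` of `λ̃ⁿ`, `τ'` of `τ̃`;
`𝓗ⁿ_t` is generated by the events `{τ_n ≤ s}`, `0 ≤ s ≤ t`, and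
`𝒢_t^{(k)} = 𝓕_t ∨ 𝓗¹_t ∨ … ∨ 𝓗ᵏ_t`. -/
theorem stmt_10
    {Ω Ω' : Type*} [mΩ : MeasurableSpace Ω] [mΩ' : MeasurableSpace Ω']
    (P : Measure Ω) (Phat : Measure Ω')
    [IsProbabilityMeasure P] [IsProbabilityMeasure Phat]
    (F : Filtration ℝ mΩ) (hF : (⨆ t : ℝ, (F t : MeasurableSpace Ω)) = mΩ)
    (N : ℕ) (hN : 1 ≤ N)
    (E : ℕ → Ω' → ℝ) (hE_meas : ∀ n, Measurable (E n))
    (hE_indep : iIndepFun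
      (fun i : Fin N => E ((i : ℕ) + 1)) Phat)
    (hE_exp : ∀ n : ℕ, 1 ≤ n → n ≤ N → ∀ x : ℝ, 0 ≤ x →
      Phat {ω | x < E n ω} = ENNReal.ofReal (Real.exp (-x)))
    (lam : ℕ → ℝ → Ω → ℝ)
    (hlam_meas : ∀ n, Measurable fun q : ℝ × Ω => lam n q.1 q.2)
    (hlam_nonneg : ∀ n s ω, 0 ≤ lam n s ω)
    (hlam_adapted : ∀ n t, Measurable[F t] fun ω => lam n t ω)
    (hlam_int : ∀ n : ℕ, 1 ≤ n → n ≤ N → ∀ᵐ ω ∂P,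
      (∀ t : ℝ, ∫⁻ s in Set.Ioc (0:ℝ) t, ENNReal.ofReal (lam n s ω) < ⊤) ∧
      (∫⁻ s in Set.Ioi (0:ℝ), ENNReal.ofReal (lam n s ω) = ⊤))
    (τ' : ℕ → Ω × Ω' → ℝ)
    (hτ' : ∀ n p, τ' n p
      = sInf {t : ℝ | 0 < t ∧ E n p.2 ≤ ∫ s in Set.Ioc (0:ℝ) t, lam n s p.1})
    (τ : ℕ → Ω × Ω' → ℝ)
    (hτ : ∀ n p, τ n p = ∑ k ∈ Finset.Icc 1 n, τ' k p)
    -- `[0,∞]`-valued extensions implementing the conventions `τ_{N+1} = τ̃_{N+1} = +∞`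
    (τe : ℕ → Ω × Ω' → ENNReal)
    (hτe : ∀ n : ℕ, n ≤ N → ∀ p, τe n p = ENNReal.ofReal (τ n p))
    (hτe_top : ∀ p, τe (N + 1) p = ⊤)
    (τ'e : ℕ → Ω × Ω' → ENNReal)
    (hτ'e : ∀ n : ℕ, n ≤ N → ∀ p, τ'e n p = ENNReal.ofReal (τ' n p))
    (hτ'e_top : ∀ p, τ'e (N + 1) p = ⊤) :
    ∀ Y : Ω × Ω' → ℝ, Integrable Y (P.prod Phat) →
      ∀ k : ℕ, k ≤ N → ∀ t : ℝ, 0 ≤ t →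
        (∀ᵐ p ∂(P.prod Phat),
          (τe k p ≤ ENNReal.ofReal t ∧ ENNReal.ofReal t < τe (k + 1) p) →
            0 < ((P.prod Phat)[Set.indicator
                  {q : Ω × Ω' | ENNReal.ofReal t < τe (k + 1) q} (fun _ => (1 : ℝ)) |
                MeasurableSpace.comap Prod.fst (F t) ⊔
                  ⨆ i ∈ Finset.Icc 1 k,
                    MeasurableSpace.generateFrom
                      {A : Set (Ω × Ω') | ∃ s : ℝ, 0 ≤ s ∧ s ≤ t ∧ A = {q | τ i q ≤ s}}]) p) ∧
        ((P.prod Phat)[Set.indicator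
              {q : Ω × Ω' | τe k q ≤ ENNReal.ofReal t ∧ ENNReal.ofReal t < τe (k + 1) q} Y |
            MeasurableSpace.comap Prod.fst (F t) ⊔
              ⨆ i ∈ Finset.Icc 1 N,
                MeasurableSpace.generateFrom
                  {A : Set (Ω × Ω') | ∃ s : ℝ, 0 ≤ s ∧ s ≤ t ∧ A = {q | τ i q ≤ s}}]
          =ᵐ[P.prod Phat]
        Set.indicator
            {q : Ω × Ω' | τe k q ≤ ENNReal.ofReal t ∧ ENNReal.ofReal t < τe (k + 1) q}
            (fun p =>
              ((P.prod Phat)[Set.indicator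
                    {q : Ω × Ω' | ENNReal.ofReal (t - τ k q) < τ'e (k + 1) q} Y |
                  MeasurableSpace.comap Prod.fst (F t) ⊔
                    ⨆ i ∈ Finset.Icc 1 k,
                      MeasurableSpace.generateFrom
                        {A : Set (Ω × Ω') | ∃ s : ℝ, 0 ≤ s ∧ s ≤ t ∧ A = {q | τ i q ≤ s}}]) p
              / ((P.prod Phat)[Set.indicator
                    {q : Ω × Ω' | ENNReal.ofReal t < τe (k + 1) q} (fun _ => (1 : ℝ)) |
                  MeasurableSpace.comap Prod.fst (F t) ⊔
                    ⨆ i ∈ Finset.Icc 1 k,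
                      MeasurableSpace.generateFrom
                        {A : Set (Ω × Ω') | ∃ s : ℝ, 0 ≤ s ∧ s ≤ t ∧ A = {q | τ i q ≤ s}}]) p)) :=
  stmt_10_general (mΩ := mΩ) (mΩ' := mΩ') P Phat F N E hE_meas lam hlam_meas hlam_nonneg τ' hτ' τ hτ
    τe hτe hτe_top τ'e hτ'e hτ'e_top
end

section
/- Let (Ω̂, 𝓑̂, P̂) be a probability space carrying independent unit-exponentially distributed random variables E₁, E₂, let f₁, f₂ : [0,∞) → [0,∞) be measurable with ∫_0^t f_i(s) ds < ∞ for all t ≥ 0 and ∫_0^∞ f_i(s) ds = ∞, set Λ_i(t) := ∫_0^t f_i(s) ds, T₁ := inf{t > 0 : Λ₁(t) ≥ E₁} and T₂ := T₁ + inf{t > 0 : Λ₂(t) ≥ E₂}. Then for all 0 ≤ t ≤ T: P̂(T₁ > t and T₂ > T) = ∫_t^T e^{−Λ₂(T − x)} e^{−Λ₁(x)} f₁(x) dx + e^{−Λ₁(T)}. -/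
/-!
The event splits according to whether the first default comes after the maturity `M`. Since
`T₁ > x` exactly when `E₁ > Λ₁ x`, the first part has probability `e^{-Λ₁ M}`. Otherwise
`T₁ ∈ (t, M]`, and the second default comes after `M` exactly when `E₂ > Λ₂ (M - T₁)`. As `T₁` is
a function of `E₁`, it is independent of `E₂`, so this part is the integral of `e^{-Λ₂ (M - x)}`
against the law of `T₁`. That law has density `e^{-Λ₁} f₁` on `(0, ∞)`: for `a ≥ 0` both measures
give `(-∞, a]` the mass `1 - e^{-Λ₁ a}`, by the fundamental theorem of calculus for the absolutely
continuous function `e^{-Λ₁}`.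
-/

open MeasureTheory ProbabilityTheory Set

open Filter Real

namespace AbsolutelyContinuousOnInterval

variable {a b : ℝ}

theorem lipschitzOnWith_comp {X Y : Type*} [PseudoMetricSpace X] [PseudoMetricSpace Y]
    {f : ℝ → X} {φ : X → Y} {s : Set X} {K : NNReal} (hφ : LipschitzOnWith K φ s)
    (hfs : MapsTo f (uIcc a b) s) (hf : AbsolutelyContinuousOnInterval f a b) :
    AbsolutelyContinuousOnInterval (φ ∘ f) a b := by
  unfold AbsolutelyContinuousOnInterval at hf ⊢
  have hKf := Filter.Tendsto.const_mul (K : ℝ) hf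
  rw [mul_zero] at hKf
  refine squeeze_zero' (.of_forall fun E ↦ Finset.sum_nonneg fun _ _ ↦ dist_nonneg) ?_ hKf
  filter_upwards [mem_inf_of_right (mem_principal_self _)] with E hE
  rw [Finset.mul_sum]
  refine Finset.sum_le_sum fun i hi ↦ ?_
  exact hφ.dist_le_mul _ (hfs (hE.1 i hi).1) _ (hfs (hE.1 i hi).2)

theorem locallyLipschitz_comp {Y : Type*} [PseudoMetricSpace Y] {f : ℝ → ℝ} {φ : ℝ → Y}
    (hφ : LocallyLipschitz φ) (hf : AbsolutelyContinuousOnInterval f a b) :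
    AbsolutelyContinuousOnInterval (φ ∘ f) a b := by
  obtain ⟨K, hK⟩ := hφ.locallyLipschitzOn.exists_lipschitzOnWith_of_compact
    (isCompact_uIcc.image_of_continuousOn hf.continuousOn)
  exact hf.lipschitzOnWith_comp hK (mapsTo_image f _)

end AbsolutelyContinuousOnInterval

theorem IntervalIntegrable.integral_deriv_comp_primitive_mul_eq_sub {g φ : ℝ → ℝ} {a b c : ℝ}
    (hg : IntervalIntegrable g volume a b) (hc : c ∈ uIcc a b) (hφ : ContDiff ℝ 1 φ) :
    ∫ x in a..b, deriv φ (∫ t in c..x, g t) * g x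
      = φ (∫ t in c..b, g t) - φ (∫ t in c..a, g t) := by
  have hG := hg.absolutelyContinuousOnInterval_intervalIntegral hc
  refine Eq.trans ?_ (hG.locallyLipschitz_comp hφ.locallyLipschitz).integral_deriv_eq_sub
  refine intervalIntegral.integral_congr_ae ?_
  filter_upwards [hg.ae_hasDerivAt_integral] with x hx hxab
  exact (((hφ.differentiable one_ne_zero _).hasDerivAt.comp x
    (hx (uIoc_subset_uIcc hxab) c hc)).deriv).symm

noncomputable def firstPassageTime (Λ : ℝ → ℝ) (e : ℝ) : ℝ := sInf {t : ℝ | 0 < t ∧ e ≤ Λ t}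

section FirstPassageTime

variable {Λ : ℝ → ℝ}

theorem firstPassageTime_nonneg (Λ : ℝ → ℝ) (e : ℝ) : 0 ≤ firstPassageTime Λ e :=
  Real.sInf_nonneg fun _ ht ↦ ht.1.le

theorem nonempty_firstPassage (hΛ : Tendsto Λ atTop atTop) (e : ℝ) :
    {t : ℝ | 0 < t ∧ e ≤ Λ t}.Nonempty :=
  ((eventually_gt_atTop 0).and (hΛ.eventually_ge_atTop e)).exists

theorem bddBelow_firstPassage (Λ : ℝ → ℝ) (e : ℝ) : BddBelow {t : ℝ | 0 < t ∧ e ≤ Λ t} :=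
  ⟨0, fun _ ht ↦ ht.1.le⟩

theorem lt_firstPassageTime_iff (hmono : Monotone Λ) (hcont : Continuous Λ)
    (htop : Tendsto Λ atTop atTop) {e x : ℝ} (hx : 0 ≤ x) :
    x < firstPassageTime Λ e ↔ Λ x < e := by
  constructor
  · intro hlt
    by_contra! hle
    have hsub : Ioi x ⊆ {t : ℝ | 0 < t ∧ e ≤ Λ t} :=
      fun t ht ↦ ⟨hx.trans_lt ht, hle.trans (hmono (le_of_lt ht))⟩
    have := csInf_le_csInf (bddBelow_firstPassage Λ e) nonempty_Ioi hsub
    rw [csInf_Ioi] at this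
    exact (hlt.trans_le this).false
  · intro hlt
    obtain ⟨y, hy, hxy⟩ := (((hcont.tendsto x).eventually_lt_const hlt).filter_mono
      nhdsWithin_le_nhds |>.and (self_mem_nhdsWithin (s := Ioi x))).exists
    refine hxy.trans_le (le_csInf (nonempty_firstPassage htop e) fun t ht ↦ ?_)
    by_contra! hty
    exact (ht.2.trans (hmono hty.le)).not_gt hy

theorem monotone_firstPassageTime (htop : Tendsto Λ atTop atTop) :
    Monotone (firstPassageTime Λ) := fun _ _ he ↦
  csInf_le_csInf (bddBelow_firstPassage Λ _) (nonempty_firstPassage htop _)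
    fun _ ht ↦ ⟨ht.1, he.trans ht.2⟩

theorem lt_add_firstPassageTime_iff (hmono : Monotone Λ) (hcont : Continuous Λ)
    (htop : Tendsto Λ atTop atTop) {t M x y : ℝ} (htM : t ≤ M) :
    t < x ∧ M < x + firstPassageTime Λ y ↔ M < x ∨ (x ∈ Ioc t M ∧ Λ (M - x) < y) := by
  rcases lt_or_ge M x with hMx | hxM
  · have := firstPassageTime_nonneg Λ y
    exact iff_of_true ⟨htM.trans_lt hMx, by linarith⟩ (Or.inl hMx)
  · rw [← lt_firstPassageTime_iff hmono hcont htop (sub_nonneg.2 hxM), sub_lt_iff_lt_add']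
    simp [hxM, not_lt.2 hxM]

end FirstPassageTime

structure IsCumulativeIntensity (Λ : ℝ → ℝ) : Prop where
  monotone : Monotone Λ
  continuous : Continuous Λ
  tendsto_atTop : Tendsto Λ atTop atTop
  nonneg : ∀ x, 0 ≤ Λ x

noncomputable def cumulativeIntensity (f : ℝ → ℝ) (t : ℝ) : ℝ := ∫ s in Ioc 0 t, f s

section CumulativeIntensity

variable {f : ℝ → ℝ}

theorem integrableOn_Ioc_zero_of_lintegral_lt_top (hf : Measurable f)
    (hf_nonneg : ∀ s, 0 ≤ s → 0 ≤ f s) {b : ℝ}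
    (hf_fin : ∫⁻ s in Ioc (0:ℝ) b, ENNReal.ofReal (f s) < ⊤) : IntegrableOn f (Ioc 0 b) := by
  refine ⟨hf.aestronglyMeasurable, (hasFiniteIntegral_iff_ofReal ?_).2 hf_fin⟩
  filter_upwards [ae_restrict_mem measurableSet_Ioc] with s hs
  exact hf_nonneg s hs.1.le

theorem intervalIntegrable_indicator_Ioi_zero (hf : Measurable f)
    (hf_nonneg : ∀ s, 0 ≤ s → 0 ≤ f s)
    (hf_fin : ∀ t, ∫⁻ s in Ioc (0:ℝ) t, ENNReal.ofReal (f s) < ⊤) (a b : ℝ) :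
    IntervalIntegrable ((Ioi 0).indicator f) volume a b := by
  have hIic : IntegrableOn ((Ioi 0).indicator f) (Iic (max a b)) := by
    rw [IntegrableOn, integrable_indicator_iff measurableSet_Ioi, IntegrableOn,
      Measure.restrict_restrict measurableSet_Ioi, Ioi_inter_Iic]
    exact integrableOn_Ioc_zero_of_lintegral_lt_top hf hf_nonneg (hf_fin _)
  exact intervalIntegrable_iff.2 (hIic.mono_set fun _ hx ↦ hx.2)

theorem cumulativeIntensity_eq_intervalIntegral (f : ℝ → ℝ) (x : ℝ) :
    cumulativeIntensity f x = ∫ s in (0:ℝ)..x, (Ioi 0).indicator f s := by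
  rcases le_total 0 x with hx | hx
  · rw [cumulativeIntensity, intervalIntegral.integral_of_le hx]
    exact setIntegral_congr_fun measurableSet_Ioc fun s hs ↦ (indicator_of_mem hs.1 f).symm
  · have hzero : ∀ s ∈ Ioc x 0, (Ioi (0:ℝ)).indicator f s = 0 :=
      fun s hs ↦ indicator_of_notMem (not_lt.2 hs.2) f
    rw [cumulativeIntensity, Ioc_eq_empty (not_lt.2 hx), intervalIntegral.integral_of_ge hx,
      setIntegral_eq_zero_of_forall_eq_zero hzero]
    simp

theorem cumulativeIntensity_nonneg (hf_nonneg : ∀ s, 0 ≤ s → 0 ≤ f s) (x : ℝ) :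
    0 ≤ cumulativeIntensity f x :=
  setIntegral_nonneg measurableSet_Ioc fun s hs ↦ hf_nonneg s hs.1.le

theorem monotone_cumulativeIntensity (hf : Measurable f) (hf_nonneg : ∀ s, 0 ≤ s → 0 ≤ f s)
    (hf_fin : ∀ t, ∫⁻ s in Ioc (0:ℝ) t, ENNReal.ofReal (f s) < ⊤) :
    Monotone (cumulativeIntensity f) := by
  intro x y hxy
  refine setIntegral_mono_set
    (integrableOn_Ioc_zero_of_lintegral_lt_top hf hf_nonneg (hf_fin y)) ?_
    (Ioc_subset_Ioc_right hxy).eventuallyLE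
  filter_upwards [ae_restrict_mem measurableSet_Ioc] with s hs
  exact hf_nonneg s hs.1.le

theorem continuous_cumulativeIntensity (hf : Measurable f) (hf_nonneg : ∀ s, 0 ≤ s → 0 ≤ f s)
    (hf_fin : ∀ t, ∫⁻ s in Ioc (0:ℝ) t, ENNReal.ofReal (f s) < ⊤) :
    Continuous (cumulativeIntensity f) := by
  rw [funext (cumulativeIntensity_eq_intervalIntegral f)]
  exact intervalIntegral.continuous_primitive
    (intervalIntegrable_indicator_Ioi_zero hf hf_nonneg hf_fin) 0

theorem tendsto_cumulativeIntensity_atTop (hf : Measurable f)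
    (hf_nonneg : ∀ s, 0 ≤ s → 0 ≤ f s)
    (hf_fin : ∀ t, ∫⁻ s in Ioc (0:ℝ) t, ENNReal.ofReal (f s) < ⊤)
    (hf_inf : ∫⁻ s in Ioi (0:ℝ), ENNReal.ofReal (f s) = ⊤) :
    Tendsto (cumulativeIntensity f) atTop atTop := by
  refine tendsto_atTop_atTop_of_monotone
    (monotone_cumulativeIntensity hf hf_nonneg hf_fin) fun u ↦ ?_
  by_contra! hlt
  have hIoi : Ioi (0:ℝ) = ⋃ n : ℕ, Ioc 0 (n : ℝ) :=
    (iUnion_Ioc_eq_Ioi_self_iff.2 fun x _ ↦ exists_nat_ge x).symm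
  have hle : ∫⁻ s in Ioi (0:ℝ), ENNReal.ofReal (f s) ≤ ENNReal.ofReal u := by
    rw [hIoi, setLIntegral_iUnion_of_directed _
      (Monotone.directed_le fun m n hmn ↦ Ioc_subset_Ioc_right (by exact_mod_cast hmn))]
    refine iSup_le fun n ↦ ?_
    rw [← ofReal_integral_eq_lintegral_ofReal
      (integrableOn_Ioc_zero_of_lintegral_lt_top hf hf_nonneg (hf_fin n))]
    · exact ENNReal.ofReal_le_ofReal (hlt n).le
    · filter_upwards [ae_restrict_mem measurableSet_Ioc] with s hs
      exact hf_nonneg s hs.1.le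
  exact ENNReal.ofReal_ne_top (top_le_iff.1 (hf_inf ▸ hle))

theorem integral_Ioc_exp_neg_cumulativeIntensity_mul (hf : Measurable f)
    (hf_nonneg : ∀ s, 0 ≤ s → 0 ≤ f s)
    (hf_fin : ∀ t, ∫⁻ s in Ioc (0:ℝ) t, ENNReal.ofReal (f s) < ⊤) {b : ℝ} (hb : 0 ≤ b) :
    ∫ x in Ioc 0 b, exp (-cumulativeIntensity f x) * f x = 1 - exp (-cumulativeIntensity f b) := by
  have hderiv (y : ℝ) : deriv (fun y ↦ -exp (-y)) y = exp (-y) := by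
    simpa using ((hasDerivAt_neg y).exp.neg).deriv
  have hftc := (intervalIntegrable_indicator_Ioi_zero hf hf_nonneg hf_fin 0 b
    ).integral_deriv_comp_primitive_mul_eq_sub left_mem_uIcc (φ := fun y ↦ -exp (-y))
      (by fun_prop)
  simp only [hderiv, ← cumulativeIntensity_eq_intervalIntegral] at hftc
  rw [intervalIntegral.integral_of_le hb] at hftc
  have hf_eq : EqOn (fun x ↦ exp (-cumulativeIntensity f x) * (Ioi (0:ℝ)).indicator f x)
      (fun x ↦ exp (-cumulativeIntensity f x) * f x) (Ioc 0 b) :=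
    fun x hx ↦ by simp only [indicator_of_mem (show x ∈ Ioi (0:ℝ) from hx.1)]
  rw [← setIntegral_congr_fun measurableSet_Ioc hf_eq, hftc]
  simp [cumulativeIntensity]
  ring

theorem integrableOn_exp_neg_cumulativeIntensity_mul (hf : Measurable f)
    (hf_nonneg : ∀ s, 0 ≤ s → 0 ≤ f s)
    (hf_fin : ∀ t, ∫⁻ s in Ioc (0:ℝ) t, ENNReal.ofReal (f s) < ⊤) (b : ℝ) :
    IntegrableOn (fun x ↦ exp (-cumulativeIntensity f x) * f x) (Ioc 0 b) := by
  refine (integrableOn_Ioc_zero_of_lintegral_lt_top hf hf_nonneg (hf_fin b)).bdd_mul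
    (continuous_cumulativeIntensity hf hf_nonneg hf_fin).neg.rexp.aestronglyMeasurable
    (c := 1) (.of_forall fun x ↦ ?_)
  rw [norm_of_nonneg (exp_pos _).le, exp_le_one_iff, neg_nonpos]
  exact cumulativeIntensity_nonneg hf_nonneg x

theorem lintegral_Ioc_exp_neg_cumulativeIntensity_mul (hf : Measurable f)
    (hf_nonneg : ∀ s, 0 ≤ s → 0 ≤ f s)
    (hf_fin : ∀ t, ∫⁻ s in Ioc (0:ℝ) t, ENNReal.ofReal (f s) < ⊤) {b : ℝ} (hb : 0 ≤ b) :
    ∫⁻ x in Ioc 0 b, ENNReal.ofReal (exp (-cumulativeIntensity f x) * f x)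
      = ENNReal.ofReal (1 - exp (-cumulativeIntensity f b)) := by
  rw [← ofReal_integral_eq_lintegral_ofReal
      (integrableOn_exp_neg_cumulativeIntensity_mul hf hf_nonneg hf_fin b),
    integral_Ioc_exp_neg_cumulativeIntensity_mul hf hf_nonneg hf_fin hb]
  filter_upwards [ae_restrict_mem measurableSet_Ioc] with x hx
  exact mul_nonneg (exp_pos _).le (hf_nonneg x hx.1.le)

theorem isCumulativeIntensity_cumulativeIntensity (hf : Measurable f)
    (hf_nonneg : ∀ s, 0 ≤ s → 0 ≤ f s)
    (hf_fin : ∀ t, ∫⁻ s in Ioc (0:ℝ) t, ENNReal.ofReal (f s) < ⊤)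
    (hf_inf : ∫⁻ s in Ioi (0:ℝ), ENNReal.ofReal (f s) = ⊤) :
    IsCumulativeIntensity (cumulativeIntensity f) where
  monotone := monotone_cumulativeIntensity hf hf_nonneg hf_fin
  continuous := continuous_cumulativeIntensity hf hf_nonneg hf_fin
  tendsto_atTop := tendsto_cumulativeIntensity_atTop hf hf_nonneg hf_fin hf_inf
  nonneg := cumulativeIntensity_nonneg hf_nonneg

end CumulativeIntensity

section Law

variable {Ω : Type*} [MeasurableSpace Ω] {P : Measure Ω}

theorem ProbabilityTheory.IndepFun.measure_mem_and_lt [IsFiniteMeasure P] {X Y : Ω → ℝ}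
    (hX : Measurable X) (hY : Measurable Y) (hXY : IndepFun X Y P) {s : Set ℝ}
    (hs : MeasurableSet s) {h : ℝ → ℝ} (hh : Measurable h) :
    P {ω | X ω ∈ s ∧ h (X ω) < Y ω} = ∫⁻ x in s, P {ω | h x < Y ω} ∂(P.map X) := by
  set S : Set (ℝ × ℝ) := {p | p.1 ∈ s ∧ h p.1 < p.2}
  have hS : MeasurableSet S :=
    (measurable_fst hs).inter (measurableSet_lt (hh.comp measurable_fst) measurable_snd)
  change P ((fun ω ↦ (X ω, Y ω)) ⁻¹' S) = _
  rw [← Measure.map_apply (hX.prodMk hY) hS,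
    (indepFun_iff_map_prod_eq_prod_map_map hX.aemeasurable hY.aemeasurable).1 hXY,
    Measure.prod_apply hS, ← lintegral_indicator hs]
  refine lintegral_congr fun x ↦ ?_
  by_cases hx : x ∈ s
  · rw [indicator_of_mem hx, Measure.map_apply hY (measurable_prodMk_left hS)]
    simp [S, hx]
  · simp [S, hx]

variable {E : Ω → ℝ} {Λ : ℝ → ℝ}

theorem measure_lt_firstPassageTime
    (hE_exp : ∀ x, 0 ≤ x → P {ω | x < E ω} = ENNReal.ofReal (exp (-x)))
    (hΛ : IsCumulativeIntensity Λ) {x : ℝ} (hx : 0 ≤ x) :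
    P {ω | x < firstPassageTime Λ (E ω)} = ENNReal.ofReal (exp (-Λ x)) := by
  rw [← hE_exp _ (hΛ.nonneg x)]
  congr with ω
  exact lt_firstPassageTime_iff hΛ.monotone hΛ.continuous hΛ.tendsto_atTop hx

theorem map_firstPassageTime_eq_withDensity [IsProbabilityMeasure P] (hE : Measurable E)
    (hE_exp : ∀ x, 0 ≤ x → P {ω | x < E ω} = ENNReal.ofReal (exp (-x)))
    (hΛ : IsCumulativeIntensity Λ) {d : ℝ → ENNReal}
    (hd : ∀ b, 0 ≤ b → ∫⁻ x in Ioc 0 b, d x = ENNReal.ofReal (1 - exp (-Λ b))) :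
    P.map (fun ω ↦ firstPassageTime Λ (E ω)) = (volume.restrict (Ioi 0)).withDensity d := by
  have hT : Measurable fun ω ↦ firstPassageTime Λ (E ω) :=
    (monotone_firstPassageTime hΛ.tendsto_atTop).measurable.comp hE
  have : IsProbabilityMeasure (P.map fun ω ↦ firstPassageTime Λ (E ω)) :=
    Measure.isProbabilityMeasure_map hT.aemeasurable
  refine Measure.ext_of_Iic _ _ fun a ↦ ?_
  rw [Measure.map_apply hT measurableSet_Iic, withDensity_apply _ measurableSet_Iic,
    Measure.restrict_restrict measurableSet_Iic, Iic_inter_Ioi]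
  rcases lt_or_ge a 0 with ha | ha
  · have hempty : (fun ω ↦ firstPassageTime Λ (E ω)) ⁻¹' Iic a = ∅ :=
      eq_empty_of_forall_notMem fun ω hω ↦
        (ha.trans_le (firstPassageTime_nonneg Λ (E ω))).not_ge hω
    rw [hempty, Ioc_eq_empty (not_lt.2 ha.le)]
    simp
  · have hcompl : (fun ω ↦ firstPassageTime Λ (E ω)) ⁻¹' Iic a
        = {ω | a < firstPassageTime Λ (E ω)}ᶜ := by
      ext ω
      simp
    rw [hcompl, measure_compl (measurableSet_lt measurable_const hT) (measure_ne_top _ _),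
      measure_univ, measure_lt_firstPassageTime hE_exp hΛ ha, hd a ha,
      ENNReal.ofReal_sub _ (exp_pos _).le, ENNReal.ofReal_one]

theorem measure_firstPassageTime_mem_and_lt [IsProbabilityMeasure P] {E₂ : Ω → ℝ}
    (hE : Measurable E) (hE₂ : Measurable E₂) (hindep : IndepFun E E₂ P)
    (hE_exp : ∀ x, 0 ≤ x → P {ω | x < E ω} = ENNReal.ofReal (exp (-x)))
    (hE₂_exp : ∀ x, 0 ≤ x → P {ω | x < E₂ ω} = ENNReal.ofReal (exp (-x)))
    (hΛ : IsCumulativeIntensity Λ) {g : ℝ → ℝ} (hg_meas : Measurable g)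
    (hg : ∀ b, 0 ≤ b → ∫⁻ x in Ioc 0 b, ENNReal.ofReal (g x) = ENNReal.ofReal (1 - exp (-Λ b)))
    {s : Set ℝ} (hs : MeasurableSet s) (hs_pos : s ⊆ Ioi 0) (hg_int : IntegrableOn g s)
    (hg_nonneg : ∀ x ∈ s, 0 ≤ g x) {h : ℝ → ℝ} (hh : Measurable h) (hh_nonneg : ∀ x, 0 ≤ h x) :
    P {ω | firstPassageTime Λ (E ω) ∈ s ∧ h (firstPassageTime Λ (E ω)) < E₂ ω}
      = ENNReal.ofReal (∫ x in s, exp (-h x) * g x) := by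
  have hτ := (monotone_firstPassageTime hΛ.tendsto_atTop).measurable
  have hint : IntegrableOn (fun x ↦ exp (-h x) * g x) s := by
    refine hg_int.bdd_mul (c := 1) (by fun_prop) (.of_forall fun x ↦ ?_)
    rw [norm_of_nonneg (exp_pos _).le, exp_le_one_iff, neg_nonpos]
    exact hh_nonneg x
  have hint_nonneg : 0 ≤ᵐ[volume.restrict s] fun x ↦ exp (-h x) * g x := by
    filter_upwards [ae_restrict_mem hs] with x hx
    exact mul_nonneg (exp_pos _).le (hg_nonneg x hx)
  rw [IndepFun.measure_mem_and_lt (X := fun ω ↦ firstPassageTime Λ (E ω)) (hτ.comp hE) hE₂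
      (hindep.comp hτ measurable_id) hs hh,
    map_firstPassageTime_eq_withDensity hE hE_exp hΛ hg]
  simp only [hE₂_exp _ (hh_nonneg _)]
  rw [setLIntegral_withDensity_eq_setLIntegral_mul _ hg_meas.ennreal_ofReal (by fun_prop) hs,
    Measure.restrict_restrict hs, inter_eq_left.2 hs_pos,
    ofReal_integral_eq_lintegral_ofReal hint hint_nonneg]
  refine lintegral_congr fun x ↦ ?_
  rw [Pi.mul_apply, ENNReal.ofReal_mul (exp_pos _).le, mul_comm]

end Law

/-- joint survival probability of the two ordered Cox times with
deterministic intensities: `P̂(T₁ > t, T₂ > M) = ∫_t^M e^{−Λ₂(M−x)} e^{−Λ₁(x)} f₁(x) dx + e^{−Λ₁(M)}`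
for `0 ≤ t ≤ M`. `Ω'` plays the role of `Ω̂`, `Phat` of `P̂`. -/
theorem stmt_17
    {Ω' : Type*} [MeasurableSpace Ω'] (Phat : Measure Ω') [IsProbabilityMeasure Phat]
    (E₁ E₂ : Ω' → ℝ) (hE₁ : Measurable E₁) (hE₂ : Measurable E₂)
    (hEindep : IndepFun E₁ E₂ Phat)
    (hE₁exp : ∀ x : ℝ, 0 ≤ x → Phat {ω | x < E₁ ω} = ENNReal.ofReal (Real.exp (-x)))
    (hE₂exp : ∀ x : ℝ, 0 ≤ x → Phat {ω | x < E₂ ω} = ENNReal.ofReal (Real.exp (-x)))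
    (f₁ f₂ : ℝ → ℝ) (hf₁_meas : Measurable f₁) (hf₂_meas : Measurable f₂)
    (hf₁_nonneg : ∀ s : ℝ, 0 ≤ s → 0 ≤ f₁ s) (hf₂_nonneg : ∀ s : ℝ, 0 ≤ s → 0 ≤ f₂ s)
    (hf₁_fin : ∀ t : ℝ, ∫⁻ s in Set.Ioc (0:ℝ) t, ENNReal.ofReal (f₁ s) < ⊤)
    (hf₂_fin : ∀ t : ℝ, ∫⁻ s in Set.Ioc (0:ℝ) t, ENNReal.ofReal (f₂ s) < ⊤)
    (hf₁_inf : ∫⁻ s in Set.Ioi (0:ℝ), ENNReal.ofReal (f₁ s) = ⊤)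
    (hf₂_inf : ∫⁻ s in Set.Ioi (0:ℝ), ENNReal.ofReal (f₂ s) = ⊤)
    (Λ₁ Λ₂ : ℝ → ℝ)
    (hΛ₁ : ∀ t : ℝ, Λ₁ t = ∫ s in Set.Ioc (0:ℝ) t, f₁ s)
    (hΛ₂ : ∀ t : ℝ, Λ₂ t = ∫ s in Set.Ioc (0:ℝ) t, f₂ s)
    (T₁ T₂ : Ω' → ℝ)
    (hT₁ : ∀ ω, T₁ ω = sInf {t : ℝ | 0 < t ∧ E₁ ω ≤ Λ₁ t})
    (hT₂ : ∀ ω, T₂ ω = T₁ ω + sInf {t : ℝ | 0 < t ∧ E₂ ω ≤ Λ₂ t}) :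
    ∀ t M : ℝ, 0 ≤ t → t ≤ M →
      Phat {ω | t < T₁ ω ∧ M < T₂ ω}
        = ENNReal.ofReal
            ((∫ x in Set.Ioc t M, Real.exp (-Λ₂ (M - x)) * Real.exp (-Λ₁ x) * f₁ x)
              + Real.exp (-Λ₁ M)) := by
  intro t M ht htM
  obtain rfl : Λ₁ = cumulativeIntensity f₁ := funext hΛ₁
  obtain rfl : Λ₂ = cumulativeIntensity f₂ := funext hΛ₂
  have hΛ₁ := isCumulativeIntensity_cumulativeIntensity hf₁_meas hf₁_nonneg hf₁_fin hf₁_inf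
  have hΛ₂ := isCumulativeIntensity_cumulativeIntensity hf₂_meas hf₂_nonneg hf₂_fin hf₂_inf
  set Λ₁ := cumulativeIntensity f₁
  set Λ₂ := cumulativeIntensity f₂
  obtain rfl : T₁ = fun ω ↦ firstPassageTime Λ₁ (E₁ ω) := funext hT₁
  set T₁ := fun ω ↦ firstPassageTime Λ₁ (E₁ ω)
  have hevent : {ω | t < T₁ ω ∧ M < T₂ ω}
      = {ω | M < T₁ ω} ∪ {ω | T₁ ω ∈ Ioc t M ∧ Λ₂ (M - T₁ ω) < E₂ ω} := by
    ext ω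
    exact (hT₂ ω ▸ lt_add_firstPassageTime_iff hΛ₂.monotone hΛ₂.continuous hΛ₂.tendsto_atTop htM :)
  have hearly : Phat {ω | T₁ ω ∈ Ioc t M ∧ Λ₂ (M - T₁ ω) < E₂ ω}
      = ENNReal.ofReal (∫ x in Ioc t M, exp (-Λ₂ (M - x)) * (exp (-Λ₁ x) * f₁ x)) :=
    measure_firstPassageTime_mem_and_lt hE₁ hE₂ hEindep hE₁exp hE₂exp hΛ₁
      (hΛ₁.continuous.measurable.neg.exp.mul hf₁_meas)
      (fun b hb ↦ lintegral_Ioc_exp_neg_cumulativeIntensity_mul hf₁_meas hf₁_nonneg hf₁_fin hb)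
      measurableSet_Ioc (Ioc_subset_Ioi_self.trans (Ioi_subset_Ioi ht))
      ((integrableOn_exp_neg_cumulativeIntensity_mul hf₁_meas hf₁_nonneg hf₁_fin M).mono_set
        (Ioc_subset_Ioc_left ht))
      (fun x hx ↦ mul_nonneg (exp_pos _).le (hf₁_nonneg x (ht.trans hx.1.le)))
      (hΛ₂.continuous.measurable.comp (measurable_const.sub measurable_id))
      fun x ↦ hΛ₂.nonneg (M - x)
  rw [hevent, measure_union' (disjoint_left.2 fun _ hlate hearly ↦ hlate.not_ge hearly.1.2)
      (measurableSet_lt measurable_const (show Measurable T₁ from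
        (monotone_firstPassageTime hΛ₁.tendsto_atTop).measurable.comp hE₁)),
    measure_lt_firstPassageTime hE₁exp hΛ₁ (ht.trans htM), hearly,
    ENNReal.ofReal_add (setIntegral_nonneg measurableSet_Ioc fun x hx ↦ ?_) (exp_pos _).le,
    add_comm]
  · simp only [mul_assoc]
  · exact mul_nonneg (by positivity) (hf₁_nonneg x (ht.trans hx.1.le))
end
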